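/- arXiv:1903.09610 — 4 statements merged into one kernel-verified Lean document; each statement's English description precedes it below -/
import Mathlib

section
/- Let Ω ⊂ ℝ^d be open and bounded and let ν be as in the context. Then V_ν(Ω|ℝ^d) ∩ L²(ℝ^d), equipped with the inner product (u,v) ↦ ∫_{ℝ^d} u v + ∬_{(Ω^c×Ω^c)^c}(u(x)−u(y))(v(x)−v(y)) ν(x−y) dx dy inducing the norm ‖·‖_{V_ν(Ω|ℝ^d)}, is a separable Hilbert space (in particular every ‖·‖_{V_ν(Ω|ℝ^d)}-Cauchy sequence converges in this norm to an element of the space). Likewise, (H_ν(Ω), ‖·‖_{H_ν(Ω)}) is a separable Hilbert space. -/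
open MeasureTheory ENNReal Filter Set Metric Topology Bornology

noncomputable section

namespace NonlocalMosco

/-- ℝ^d -/
abbrev Ed (d : ℕ) := EuclideanSpace ℝ (Fin d)

variable {d : ℕ}

/-- The set `(Ωᶜ × Ωᶜ)ᶜ = (ℝ^d × ℝ^d) ∖ (Ωᶜ × Ωᶜ)`. -/
def crossSet (Ω : Set (Ed d)) : Set (Ed d × Ed d) := (Ωᶜ ×ˢ Ωᶜ)ᶜ

/-- Squared seminorm `[u]²_{V_ν(Ω|ℝ^d)}`. -/
def vSemi (Ω : Set (Ed d)) (ν : Ed d → ℝ) (u : Ed d → ℝ) : ℝ≥0∞ :=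
  ∫⁻ p in crossSet Ω, ENNReal.ofReal ((u p.1 - u p.2)^2 * ν (p.1 - p.2))

/-- Squared seminorm `∬_{Ω×Ω} (u(x)-u(y))² ν(x-y)`. -/
def hSemi (Ω : Set (Ed d)) (ν : Ed d → ℝ) (u : Ed d → ℝ) : ℝ≥0∞ :=
  ∫⁻ p in Ω ×ˢ Ω, ENNReal.ofReal ((u p.1 - u p.2)^2 * ν (p.1 - p.2))

/-- Membership in `V_ν(Ω|ℝ^d)`: measurable with finite seminorm. -/
def MemV (Ω : Set (Ed d)) (ν : Ed d → ℝ) (u : Ed d → ℝ) : Prop :=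
  Measurable u ∧ vSemi Ω ν u < ⊤

/-- Squared `L²` norm, as a value in `[0,∞]`. -/
def l2sq (μ : Measure (Ed d)) (u : Ed d → ℝ) : ℝ≥0∞ :=
  ∫⁻ x, ENNReal.ofReal (u x ^ 2) ∂μ

/-- `‖u‖²_{V_ν(Ω|ℝ^d)} = ‖u‖²_{L²(ℝ^d)} + [u]²`. -/
def vNormSq (Ω : Set (Ed d)) (ν : Ed d → ℝ) (u : Ed d → ℝ) : ℝ≥0∞ :=
  l2sq volume u + vSemi Ω ν u

/-- `|||u|||²_{V_ν(Ω|ℝ^d)} = ‖u‖²_{L²(Ω)} + [u]²`. -/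
def vTriNormSq (Ω : Set (Ed d)) (ν : Ed d → ℝ) (u : Ed d → ℝ) : ℝ≥0∞ :=
  l2sq (volume.restrict Ω) u + vSemi Ω ν u

/-- `‖u‖²_{H_ν(Ω)} = ‖u‖²_{L²(Ω)} + ∬_{Ω×Ω}(u(x)-u(y))²ν(x-y)`. -/
def hNormSq (Ω : Set (Ed d)) (ν : Ed d → ℝ) (u : Ed d → ℝ) : ℝ≥0∞ :=
  l2sq (volume.restrict Ω) u + hSemi Ω ν u

/-- Standing assumptions on the unimodal Lévy density ν: measurable, nonnegative, radial,
`∫ (1 ∧ |h|²) ν(h) dh < ∞`, and almost decreasing. -/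
def NuLevy (ν : Ed d → ℝ) : Prop :=
  Measurable ν ∧ (∀ x, 0 ≤ ν x) ∧ (∀ x y : Ed d, ‖x‖ = ‖y‖ → ν x = ν y) ∧
  (∫⁻ h, ENNReal.ofReal (min 1 (‖h‖^2) * ν h)) < ⊤ ∧
  ∃ c : ℝ, 1 ≤ c ∧ ∀ x y : Ed d, x ≠ 0 → ‖x‖ ≤ ‖y‖ → ν y ≤ c * ν x

/-- Standing assumptions on the family `(ρ_ε)_{0<ε<2}`: measurable, nonnegative, radial,
total integral one, concentrating at the origin, and `|h|⁻²ρ_ε(h)` almost decreasing. -/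
def IsApproxIdentityFamily (ρ : ℝ → Ed d → ℝ) : Prop :=
  (∀ ε ∈ Set.Ioo (0:ℝ) 2, Measurable (ρ ε) ∧ (∀ x, 0 ≤ ρ ε x) ∧
    (∀ x y : Ed d, ‖x‖ = ‖y‖ → ρ ε x = ρ ε y) ∧ (∫ x, ρ ε x) = 1) ∧
  (∀ δ : ℝ, 0 < δ →
    Tendsto (fun ε => ∫ x in {x : Ed d | δ < ‖x‖}, ρ ε x) (𝓝[Set.Ioo (0:ℝ) 2] 0) (𝓝 0)) ∧
  ∃ c : ℝ, 1 ≤ c ∧ ∀ ε ∈ Set.Ioo (0:ℝ) 2, ∀ x y : Ed d, x ≠ 0 → ‖x‖ ≤ ‖y‖ →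
    ρ ε y / ‖y‖^2 ≤ c * (ρ ε x / ‖x‖^2)

/-- `ν^α(h) = |h|⁻² ρ_{2-α}(h)`. -/
def nuA (ρ : ℝ → Ed d → ℝ) (α : ℝ) (h : Ed d) : ℝ := ρ (2 - α) h / ‖h‖^2

/-- The kernels `J^α` are measurable and symmetric. -/
def IsKernelFamily (J : ℝ → Ed d → Ed d → ℝ≥0∞) : Prop :=
  ∀ α ∈ Set.Ioo (0:ℝ) 2, Measurable (Function.uncurry (J α)) ∧ ∀ x y, J α x y = J α y x

/-- Condition (E): comparability with `ν^α` on `{|x-y| ≤ 1}`. -/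
def CondE (ρ : ℝ → Ed d → ℝ) (J : ℝ → Ed d → Ed d → ℝ≥0∞) (Λ : ℝ) : Prop :=
  1 ≤ Λ ∧ ∀ α ∈ Set.Ioo (0:ℝ) 2, ∀ x y : Ed d, x ≠ y → ‖x - y‖ ≤ 1 →
    ENNReal.ofReal (Λ⁻¹ * nuA ρ α (x - y)) ≤ J α x y ∧
    J α x y ≤ ENNReal.ofReal (Λ * nuA ρ α (x - y))

/-- Condition (L): uniform vanishing of long-range interactions as `α → 2⁻`. -/
def CondL (J : ℝ → Ed d → Ed d → ℝ≥0∞) : Prop :=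
  ∀ δ : ℝ, 0 < δ →
    Tendsto (fun α => ⨆ x : Ed d, ∫⁻ h in {h : Ed d | δ < ‖h‖}, J α x (x + h))
      (𝓝[Set.Ioo (0:ℝ) 2] 2) (𝓝 0)

/-- Condition (I): translation invariance. -/
def CondI (J : ℝ → Ed d → Ed d → ℝ≥0∞) : Prop :=
  ∀ α ∈ Set.Ioo (0:ℝ) 2, ∀ x y h : Ed d, x ≠ y → J α (x + h) (y + h) = J α x y

/-- Nonlocal quadratic form with kernel `J` over a set `S ⊆ ℝ^d × ℝ^d`. -/
def formOn (S : Set (Ed d × Ed d)) (J : Ed d → Ed d → ℝ≥0∞) (u : Ed d → ℝ) : ℝ≥0∞ :=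
  ∫⁻ p in S, ENNReal.ofReal ((u p.1 - u p.2)^2) * J p.1 p.2

/-- `E^α_Ω(u,u)`. -/
def formOmega (Ω : Set (Ed d)) (J : Ed d → Ed d → ℝ≥0∞) (u : Ed d → ℝ) : ℝ≥0∞ :=
  formOn (Ω ×ˢ Ω) J u

/-- `E^α(u,u)` over `(Ωᶜ×Ωᶜ)ᶜ`. -/
def formCross (Ω : Set (Ed d)) (J : Ed d → Ed d → ℝ≥0∞) (u : Ed d → ℝ) : ℝ≥0∞ :=
  formOn (crossSet Ω) J u

/-- The limits `a_ij(x) = lim_{α→2⁻} ∫_{B_δ(0)} h_i h_j J^α(x,x+h) dh` exist and equal `A x i j`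
(for some δ > 0). -/
def MatrixLimit (J : ℝ → Ed d → Ed d → ℝ≥0∞) (A : Ed d → Matrix (Fin d) (Fin d) ℝ) : Prop :=
  ∃ δ : ℝ, 0 < δ ∧ ∀ x : Ed d, ∀ i j : Fin d,
    Tendsto (fun α => ∫ h in Metric.ball (0 : Ed d) δ, h i * h j * (J α x (x + h)).toReal)
      (𝓝[Set.Ioo (0:ℝ) 2] 2) (𝓝 (A x i j))

/-- `g` is a weak gradient of `u` on the open set `Ω`. -/
def HasWeakGradientOn (Ω : Set (Ed d)) (u : Ed d → ℝ) (g : Ed d → Ed d) : Prop :=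
  LocallyIntegrableOn u Ω ∧ LocallyIntegrableOn g Ω ∧
  ∀ φ : Ed d → ℝ, ContDiff ℝ (⊤ : ℕ∞) φ → HasCompactSupport φ → tsupport φ ⊆ Ω →
    ∫ x in Ω, u x • gradient φ x = - ∫ x in Ω, φ x • g x

/-- Membership in the Sobolev space `H¹(Ω)`. -/
def MemH1 (Ω : Set (Ed d)) (u : Ed d → ℝ) : Prop :=
  MemLp u 2 (volume.restrict Ω) ∧
  ∃ g : Ed d → Ed d, MemLp g 2 (volume.restrict Ω) ∧ HasWeakGradientOn Ω u g

/-- `∫_Ω |∇u|²`, via the (a.e. unique) weak gradient; `∞` if there is none. -/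
def gradNormSq (Ω : Set (Ed d)) (u : Ed d → ℝ) : ℝ≥0∞ :=
  ⨅ g ∈ {g | HasWeakGradientOn Ω u g}, ∫⁻ x in Ω, ENNReal.ofReal (‖g x‖^2)

/-- Squared `H¹(Ω)` norm. -/
def h1NormSq (Ω : Set (Ed d)) (u : Ed d → ℝ) : ℝ≥0∞ :=
  l2sq (volume.restrict Ω) u + gradNormSq Ω u

/-- `E^A(u,u) = ∫_Ω ⟨A(x)∇u(x),∇u(x)⟩ dx`, via the (a.e. unique) weak gradient. -/
def eaForm (Ω : Set (Ed d)) (A : Ed d → Matrix (Fin d) (Fin d) ℝ) (u : Ed d → ℝ) : ℝ≥0∞ :=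
  ⨅ g ∈ {g | HasWeakGradientOn Ω u g},
    ∫⁻ x in Ω, ENNReal.ofReal (∑ i, ∑ j, A x i j * g x j * g x i)

open Classical in
/-- `extVal P v = v` if `P` holds, and `∞` otherwise. -/
def extVal (P : Prop) (v : ℝ≥0∞) : ℝ≥0∞ := if P then v else ⊤

/-- `H¹`-extension domain. -/
def IsExtensionDomain (D : Set (Ed d)) : Prop :=
  IsOpen D ∧ ∃ C : ℝ, 0 < C ∧ ∀ u : Ed d → ℝ, MemH1 D u →
    ∃ v : Ed d → ℝ, MemH1 Set.univ v ∧ (∀ x ∈ D, v x = u x) ∧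
      h1NormSq Set.univ v ≤ ENNReal.ofReal C * h1NormSq D u

/-- Membership in `H¹₀(Ω)`: in `H¹(Ω)` and approximable in the `H¹(Ω)` norm by
smooth functions compactly supported in `Ω`. -/
def MemH10 (Ω : Set (Ed d)) (u : Ed d → ℝ) : Prop :=
  MemH1 Ω u ∧ ∃ useq : ℕ → Ed d → ℝ,
    (∀ n, ContDiff ℝ (⊤ : ℕ∞) (useq n) ∧ HasCompactSupport (useq n) ∧ tsupport (useq n) ⊆ Ω) ∧
    Tendsto (fun n => h1NormSq Ω (u - useq n)) atTop (𝓝 0)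

/-- Ω has a Lipschitz boundary: near every boundary point, after a rigid motion,
Ω coincides with the region above the graph of a Lipschitz function of the
first `d` coordinates. -/
def LipschitzGraphBoundary (Ω : Set (Ed (d+1))) : Prop :=
  ∀ x₀ ∈ frontier Ω, ∃ r : ℝ, 0 < r ∧
    ∃ T : Ed (d+1) ≃ᵃⁱ[ℝ] Ed (d+1), ∃ γ : Ed d → ℝ, ∃ K : NNReal,
      LipschitzWith K γ ∧
      ∀ x ∈ Metric.ball x₀ r,
        (x ∈ Ω ↔ γ (WithLp.toLp 2 (fun i => T x i.castSucc)) < T x (Fin.last d))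

/-- Ω has a continuous boundary. -/
def ContinuousGraphBoundary (Ω : Set (Ed (d+1))) : Prop :=
  ∀ x₀ ∈ frontier Ω, ∃ r : ℝ, 0 < r ∧
    ∃ T : Ed (d+1) ≃ᵃⁱ[ℝ] Ed (d+1), ∃ γ : Ed d → ℝ,
      Continuous γ ∧
      ∀ x ∈ Metric.ball x₀ r,
        (x ∈ Ω ↔ γ (WithLp.toLp 2 (fun i => T x i.castSucc)) < T x (Fin.last d))

/-- The shifted function `u^z_ε(ξ) = u(ξ + ετ e_d − εz)`. -/
def shiftFn (u : Ed (d+1) → ℝ) (τ ε : ℝ) (z : Ed (d+1)) (ξ : Ed (d+1)) : ℝ :=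
  u (ξ + ε • (τ • EuclideanSpace.single (Fin.last d) (1:ℝ) - z))

end NonlocalMosco

namespace NonlocalMosco


private lemma aux_sqLintegral {α : Type*} [MeasurableSpace α] (m : Measure α) (f : α → ℝ) :
    ∫⁻ z, ENNReal.ofReal (f z ^ 2) ∂m = eLpNorm f 2 m ^ 2 := by
  rw [eLpNorm_eq_lintegral_rpow_enorm_toReal (by norm_num) (by norm_num)]
  rw [← ENNReal.rpow_natCast _ 2, ← ENNReal.rpow_mul]
  norm_num
  congr 1
  ext z
  rw [← ENNReal.rpow_natCast ‖f z‖ₑ 2]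
  norm_num
  rw [← ofReal_norm_eq_enorm, ← ENNReal.ofReal_pow (norm_nonneg _)]
  congr 1
  rw [Real.norm_eq_abs, sq_abs]

private lemma sq_lt_top' {a : ℝ≥0∞} (h : a ^ 2 < ⊤) : a < ⊤ := by
  by_contra hc
  simp only [not_lt, top_le_iff] at hc
  rw [hc] at h
  simp [ENNReal.top_pow] at h

private lemma sq_lt_sq'' {a b : ℝ≥0∞} (h : a ^ 2 < b ^ 2) : a < b := by
  by_contra hc
  push_neg at hc
  exact absurd (pow_le_pow_left' hc 2) (not_le.2 h)

private theorem aux_core {X : Type*} [MeasurableSpace X]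
    [MeasurableSpace.CountablyGenerated X]
    (μ : Measure X) (π : Measure (X × X))
    [SigmaFinite μ] [SigmaFinite π] (hac : π ≪ μ.prod μ)
    (NN : (X → ℝ) → ℝ≥0∞)
    (hNN : ∀ u, NN u = eLpNorm u 2 μ ^ 2
      + eLpNorm (fun p : X × X => u p.1 - u p.2) 2 π ^ 2) :
    ((∀ useq : ℕ → X → ℝ,
        (∀ n, Measurable (useq n) ∧ NN (useq n) < ⊤) →
        (∀ δ : ℝ, 0 < δ → ∃ N, ∀ m ≥ N, ∀ n ≥ N,
          NN (useq m - useq n) < ENNReal.ofReal δ) →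
        ∃ u : X → ℝ, Measurable u ∧ NN u < ⊤ ∧
          Tendsto (fun n => NN (useq n - u)) atTop (𝓝 0)) ∧
      (∃ D : ℕ → X → ℝ, (∀ n, Measurable (D n) ∧ NN (D n) < ⊤) ∧
        ∀ u : X → ℝ, Measurable u → NN u < ⊤ →
          ∀ δ : ℝ, 0 < δ → ∃ n, NN (D n - u) < ENNReal.ofReal δ)) := by
  have hTm : ∀ u : X → ℝ, Measurable u →
      Measurable (fun p : X × X => u p.1 - u p.2) := fun u hu =>
    (hu.comp measurable_fst).sub (hu.comp measurable_snd)
  have hTsub : ∀ v w : X → ℝ, (fun p : X × X => (v - w) p.1 - (v - w) p.2)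
      = (fun p : X × X => v p.1 - v p.2) - (fun p : X × X => w p.1 - w p.2) := by
    intro v w; funext p; simp only [Pi.sub_apply]; ring
  have e1_le : ∀ u : X → ℝ, eLpNorm u 2 μ ^ 2 ≤ NN u := by
    intro u; rw [hNN]; exact le_self_add
  have e2_le : ∀ u : X → ℝ, eLpNorm (fun p : X × X => u p.1 - u p.2) 2 π ^ 2 ≤ NN u := by
    intro u; rw [hNN]; exact le_add_self
  have mem1 : ∀ u : X → ℝ, Measurable u → NN u < ⊤ → MemLp u 2 μ := fun u hu hf =>
    ⟨hu.aestronglyMeasurable, sq_lt_top' (lt_of_le_of_lt (e1_le u) hf)⟩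
  have mem2 : ∀ u : X → ℝ, Measurable u → NN u < ⊤ →
      MemLp (fun p : X × X => u p.1 - u p.2) 2 π := fun u hu hf =>
    ⟨(hTm u hu).aestronglyMeasurable, sq_lt_top' (lt_of_le_of_lt (e2_le u) hf)⟩
  constructor
  · -- completeness
    intro useq hm hC
    have memU : ∀ n, MemLp (useq n) 2 μ := fun n => mem1 _ (hm n).1 (hm n).2
    have memT : ∀ n, MemLp (fun p : X × X => useq n p.1 - useq n p.2) 2 π :=
      fun n => mem2 _ (hm n).1 (hm n).2
    set a : ℕ → Lp ℝ 2 μ := fun n => (memU n).toLp _ with ha_def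
    set b : ℕ → Lp ℝ 2 π := fun n => (memT n).toLp _ with hb_def
    have hda : ∀ m n : ℕ, ENNReal.ofReal (dist (a m) (a n))
        = eLpNorm (useq m - useq n) 2 μ := by
      intro m n
      rw [dist_eq_norm, ← MemLp.toLp_sub, Lp.norm_toLp,
        ENNReal.ofReal_toReal ((memU m).sub (memU n)).2.ne]
    have hdb : ∀ m n : ℕ, ENNReal.ofReal (dist (b m) (b n))
        = eLpNorm (fun p : X × X => (useq m - useq n) p.1 - (useq m - useq n) p.2) 2 π := by
      intro m n
      rw [hTsub, dist_eq_norm, ← MemLp.toLp_sub, Lp.norm_toLp,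
        ENNReal.ofReal_toReal ((memT m).sub (memT n)).2.ne]
    have hCa : CauchySeq a := by
      rw [Metric.cauchySeq_iff]
      intro ε hε
      obtain ⟨N, hN⟩ := hC (ε ^ 2) (by positivity)
      refine ⟨N, fun m hm' n hn' => ?_⟩
      have h1 : eLpNorm (useq m - useq n) 2 μ ^ 2 < ENNReal.ofReal ε ^ 2 := by
        rw [← ENNReal.ofReal_pow hε.le]
        exact lt_of_le_of_lt (e1_le _) (hN m hm' n hn')
      have h2 := sq_lt_sq'' h1
      rw [← hda] at h2
      exact (ENNReal.ofReal_lt_ofReal_iff hε).1 h2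
    have hCb : CauchySeq b := by
      rw [Metric.cauchySeq_iff]
      intro ε hε
      obtain ⟨N, hN⟩ := hC (ε ^ 2) (by positivity)
      refine ⟨N, fun m hm' n hn' => ?_⟩
      have h1 : eLpNorm (fun p : X × X => (useq m - useq n) p.1 - (useq m - useq n) p.2) 2 π ^ 2
          < ENNReal.ofReal ε ^ 2 := by
        rw [← ENNReal.ofReal_pow hε.le]
        exact lt_of_le_of_lt (e2_le _) (hN m hm' n hn')
      have h2 := sq_lt_sq'' h1
      rw [← hdb] at h2
      exact (ENNReal.ofReal_lt_ofReal_iff hε).1 h2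
    obtain ⟨A, hA⟩ := cauchySeq_tendsto_of_complete hCa
    obtain ⟨B, hB⟩ := cauchySeq_tendsto_of_complete hCb
    set u : X → ℝ := (Lp.aestronglyMeasurable A).mk _ with hu_def
    have hu_meas : Measurable u := (Lp.aestronglyMeasurable A).stronglyMeasurable_mk.measurable
    have hu_ae : ⇑A =ᵐ[μ] u := (Lp.aestronglyMeasurable A).ae_eq_mk
    have E1 : Tendsto (fun n => eLpNorm (useq n - u) 2 μ) atTop (𝓝 0) := by
      have key : ∀ n, eLpNorm (useq n - u) 2 μ = ENNReal.ofReal (dist (a n) A) := by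
        intro n
        have h1 : (useq n - u : X → ℝ) =ᵐ[μ] ⇑(a n - A) := by
          filter_upwards [(memU n).coeFn_toLp, hu_ae, Lp.coeFn_sub (a n) A] with x h1 h2 h3
          rw [h3, Pi.sub_apply, Pi.sub_apply, h1, h2]
        rw [eLpNorm_congr_ae h1, dist_eq_norm, Lp.norm_def,
          ENNReal.ofReal_toReal (Lp.eLpNorm_ne_top _)]
      simp only [key]
      have := (ENNReal.continuous_ofReal.tendsto 0).comp
        (tendsto_iff_dist_tendsto_zero.1 hA)
      simpa [Function.comp_def] using this
    have EB : Tendsto (fun n => eLpNorm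
        ((fun p : X × X => useq n p.1 - useq n p.2) - ⇑B) 2 π) atTop (𝓝 0) := by
      have key : ∀ n, eLpNorm ((fun p : X × X => useq n p.1 - useq n p.2) - ⇑B) 2 π
          = ENNReal.ofReal (dist (b n) B) := by
        intro n
        have h1 : ((fun p : X × X => useq n p.1 - useq n p.2) - ⇑B) =ᵐ[π] ⇑(b n - B) := by
          filter_upwards [(memT n).coeFn_toLp, Lp.coeFn_sub (b n) B] with p h1 h2
          rw [h2, Pi.sub_apply, Pi.sub_apply, h1]
        rw [eLpNorm_congr_ae h1, dist_eq_norm, Lp.norm_def,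
          ENNReal.ofReal_toReal (Lp.eLpNorm_ne_top _)]
      simp only [key]
      have := (ENNReal.continuous_ofReal.tendsto 0).comp
        (tendsto_iff_dist_tendsto_zero.1 hB)
      simpa [Function.comp_def] using this
    -- a.e. convergent subsequence in μ
    obtain ⟨φ, hφmono, hφae⟩ :=
      (tendstoInMeasure_of_tendsto_eLpNorm (by norm_num : (2:ℝ≥0∞) ≠ 0)
        (fun n => (memU n).1) hu_meas.aestronglyMeasurable E1).exists_seq_tendsto_ae
    have hprodae : ∀ᵐ p ∂π, Tendsto (fun i => useq (φ i) p.1 - useq (φ i) p.2) atTop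
        (𝓝 (u p.1 - u p.2)) := by
      set E := {x | Tendsto (fun i => useq (φ i) x) atTop (𝓝 (u x))} with hE_def
      have hE : μ Eᶜ = 0 := by
        rw [ae_iff] at hφae
        exact hφae
      have hsub : (E ×ˢ E)ᶜ ⊆ (Eᶜ ×ˢ (univ : Set X)) ∪ ((univ : Set X) ×ˢ Eᶜ) := by
        intro p hp
        simp only [Set.mem_compl_iff, Set.mem_prod, not_and_or] at hp
        rcases hp with h | h
        · exact Or.inl ⟨h, trivial⟩
        · exact Or.inr ⟨trivial, h⟩
      have hprod : (μ.prod μ) ((E ×ˢ E)ᶜ) = 0 := by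
        refine measure_mono_null hsub (le_antisymm ?_ zero_le)
        refine le_trans (measure_union_le _ _) ?_
        rw [Measure.prod_prod, Measure.prod_prod, hE]
        simp
      have hπ : π ((E ×ˢ E)ᶜ) = 0 := hac hprod
      have hae : ∀ᵐ p ∂π, p ∈ E ×ˢ E := by
        rw [ae_iff]
        convert hπ using 2
        rfl
      filter_upwards [hae] with p hp
      exact Tendsto.sub hp.1 hp.2
    have hbφ : Tendsto (fun i => b (φ i)) atTop (𝓝 B) := hB.comp hφmono.tendsto_atTop
    have EBφ : Tendsto (fun i => eLpNorm
        ((fun p : X × X => useq (φ i) p.1 - useq (φ i) p.2) - ⇑B) 2 π) atTop (𝓝 0) :=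
      EB.comp hφmono.tendsto_atTop
    obtain ⟨ψ, hψmono, hψae⟩ :=
      (tendstoInMeasure_of_tendsto_eLpNorm (by norm_num : (2:ℝ≥0∞) ≠ 0)
        (fun i => (memT (φ i)).1) (Lp.aestronglyMeasurable B) EBφ).exists_seq_tendsto_ae
    have hBu : ⇑B =ᵐ[π] (fun p : X × X => u p.1 - u p.2) := by
      filter_upwards [hψae, hprodae] with p h1 h2
      exact tendsto_nhds_unique h1 (h2.comp hψmono.tendsto_atTop)
    have hufin : NN u < ⊤ := by
      rw [hNN, eLpNorm_congr_ae hu_ae.symm, eLpNorm_congr_ae hBu.symm]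
      exact ENNReal.add_lt_top.2 ⟨ENNReal.pow_lt_top (Lp.eLpNorm_lt_top A),
        ENNReal.pow_lt_top (Lp.eLpNorm_lt_top B)⟩
    refine ⟨u, hu_meas, hufin, ?_⟩
    have E2 : Tendsto (fun n => eLpNorm
        ((fun p : X × X => useq n p.1 - useq n p.2)
          - (fun p : X × X => u p.1 - u p.2)) 2 π) atTop (𝓝 0) := by
      have : ∀ n, eLpNorm ((fun p : X × X => useq n p.1 - useq n p.2)
          - (fun p : X × X => u p.1 - u p.2)) 2 π
          = eLpNorm ((fun p : X × X => useq n p.1 - useq n p.2) - ⇑B) 2 π := by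
        intro n
        exact eLpNorm_congr_ae ((EventuallyEq.refl _ _).sub hBu.symm)
      simp only [this]
      exact EB
    have T1 : Tendsto (fun n => eLpNorm (useq n - u) 2 μ ^ 2) atTop (𝓝 0) := by
      have := ((ENNReal.continuous_pow 2).tendsto 0).comp E1
      simpa [Function.comp_def] using this
    have T2 : Tendsto (fun n => eLpNorm ((fun p : X × X => useq n p.1 - useq n p.2)
        - (fun p : X × X => u p.1 - u p.2)) 2 π ^ 2) atTop (𝓝 0) := by
      have := ((ENNReal.continuous_pow 2).tendsto 0).comp E2
      simpa [Function.comp_def] using this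
    have hre : ∀ n, NN (useq n - u) = eLpNorm (useq n - u) 2 μ ^ 2
        + eLpNorm ((fun p : X × X => useq n p.1 - useq n p.2)
          - (fun p : X × X => u p.1 - u p.2)) 2 π ^ 2 := by
      intro n
      rw [hNN, hTsub]
    simp only [hre]
    simpa using T1.add T2
  · -- separability
    haveI : Fact ((1:ℝ≥0∞) ≤ 2) := fact_one_le_two_ennreal
    haveI : Fact ((2:ℝ≥0∞) ≠ ∞) := ⟨by norm_num⟩
    set Z := Lp ℝ 2 μ × Lp ℝ 2 π with hZ_def
    set Sset : Set Z := {z | ∃ v : X → ℝ, Measurable v ∧ NN v < ⊤ ∧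
      ⇑z.1 =ᵐ[μ] v ∧ ⇑z.2 =ᵐ[π] fun p : X × X => v p.1 - v p.2} with hS_def
    have hzero : NN (0 : X → ℝ) < ⊤ := by
      rw [hNN]
      have h0 : (fun p : X × X => (0 : X → ℝ) p.1 - (0 : X → ℝ) p.2) = (0 : X × X → ℝ) := by
        funext p; simp
      rw [h0]
      simp
    have hS0 : ((0 : Lp ℝ 2 μ), (0 : Lp ℝ 2 π)) ∈ Sset := by
      refine ⟨0, measurable_const, hzero, ?_, ?_⟩
      · exact Lp.coeFn_zero _ _ _
      · filter_upwards [Lp.coeFn_zero ℝ 2 π] with p hp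
        simpa using hp
    -- countable dense subset of Sset
    obtain ⟨s, hsc, hsd⟩ := TopologicalSpace.exists_countable_dense ↥Sset
    set t : Set Z := Subtype.val '' s with ht_def
    have htsub : t ⊆ Sset := by simp [ht_def, Set.image_subset_iff]
    have htc : t.Countable := hsc.image _
    have htne : t.Nonempty := by
      rcases s.eq_empty_or_nonempty with h | h
      · exfalso
        rw [h] at hsd
        have := hsd.closure_eq
        simp only [closure_empty] at this
        exact (Set.eq_empty_iff_forall_notMem.1 this.symm) ⟨_, hS0⟩ trivial
      · exact h.image _
    obtain ⟨f, hf_range⟩ := htc.exists_eq_range htne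
    have hfnS : ∀ n : ℕ, f n ∈ Sset := fun n =>
      htsub (hf_range ▸ Set.mem_range_self n)
    choose D hD_meas hD_fin hD1 hD2 using hfnS
    refine ⟨D, fun n => ⟨hD_meas n, hD_fin n⟩, ?_⟩
    intro u hu hufin δ hδ
    have mu := mem1 u hu hufin
    have mt := mem2 u hu hufin
    set z : Z := (mu.toLp u, mt.toLp _) with hz_def
    have hzS : z ∈ Sset := ⟨u, hu, hufin, mu.coeFn_toLp, mt.coeFn_toLp⟩
    have hε : (0:ℝ) < Real.sqrt δ / 2 := by positivity
    obtain ⟨w, hw, hwd⟩ := Metric.mem_closure_iff.1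
      (hsd.closure_eq ▸ Set.mem_univ (⟨z, hzS⟩ : ↥Sset)) _ hε
    have hwt : (w : Z) ∈ t := Set.mem_image_of_mem _ hw
    obtain ⟨n, hn⟩ : ∃ n, f n = (w : Z) := by
      rw [hf_range] at hwt
      exact hwt
    have hdist : dist z (w : Z) < Real.sqrt δ / 2 := by
      simpa [Subtype.dist_eq] using hwd
    refine ⟨n, ?_⟩
    -- component distances
    set d1 : ℝ := dist (f n).1 z.1 with hd1_def
    set d2 : ℝ := dist (f n).2 z.2 with hd2_def
    have hcomp1 : d1 ≤ dist z (w : Z) := by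
      rw [hd1_def, hn, dist_comm z]
      rw [Prod.dist_eq]
      exact le_max_left _ _
    have hcomp2 : d2 ≤ dist z (w : Z) := by
      rw [hd2_def, hn, dist_comm z]
      rw [Prod.dist_eq]
      exact le_max_right _ _
    have he1 : eLpNorm (D n - u) 2 μ = ENNReal.ofReal d1 := by
      have h1 : (D n - u : X → ℝ) =ᵐ[μ] ⇑((f n).1 - z.1) := by
        filter_upwards [hD1 n, mu.coeFn_toLp, Lp.coeFn_sub (f n).1 z.1] with x h1 h2 h3
        rw [Pi.sub_apply, h3, Pi.sub_apply, h1, h2]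
      rw [eLpNorm_congr_ae h1, hd1_def, dist_eq_norm, Lp.norm_def,
        ENNReal.ofReal_toReal (Lp.eLpNorm_ne_top _)]
    have he2 : eLpNorm (fun p : X × X => (D n - u) p.1 - (D n - u) p.2) 2 π
        = ENNReal.ofReal d2 := by
      have h1 : (fun p : X × X => (D n - u) p.1 - (D n - u) p.2) =ᵐ[π] ⇑((f n).2 - z.2) := by
        filter_upwards [hD2 n, mt.coeFn_toLp, Lp.coeFn_sub (f n).2 z.2] with p h1 h2 h3
        rw [h3]
        simp only [Pi.sub_apply, h1, hz_def, h2]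
        ring
      rw [eLpNorm_congr_ae h1, hd2_def, dist_eq_norm, Lp.norm_def,
        ENNReal.ofReal_toReal (Lp.eLpNorm_ne_top _)]
    have hd1n : (0:ℝ) ≤ d1 := dist_nonneg
    have hd2n : (0:ℝ) ≤ d2 := dist_nonneg
    have hsum : d1 ^ 2 + d2 ^ 2 < δ := by
      have hdn : (0:ℝ) ≤ dist z (w : Z) := dist_nonneg
      have hs : Real.sqrt δ ^ 2 = δ := Real.sq_sqrt hδ.le
      nlinarith [Real.sqrt_nonneg δ]
    calc NN (D n - u) = ENNReal.ofReal d1 ^ 2 + ENNReal.ofReal d2 ^ 2 := by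
          rw [hNN, he1, he2]
      _ = ENNReal.ofReal (d1 ^ 2 + d2 ^ 2) := by
          rw [← ENNReal.ofReal_pow hd1n, ← ENNReal.ofReal_pow hd2n,
            ← ENNReal.ofReal_add (by positivity) (by positivity)]
      _ < ENNReal.ofReal δ := (ENNReal.ofReal_lt_ofReal_iff hδ).2 hsum

private lemma aux_normEq {d : ℕ} (S : Set (Ed d × Ed d)) (ν : Ed d → ℝ)
    (hνm : Measurable ν) (μ : Measure (Ed d)) (u : Ed d → ℝ) :
    l2sq μ u + (∫⁻ p in S, ENNReal.ofReal ((u p.1 - u p.2)^2 * ν (p.1 - p.2))) =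
    eLpNorm u 2 μ ^ 2 + eLpNorm (fun p : Ed d × Ed d => u p.1 - u p.2) 2
      (((volume : Measure (Ed d × Ed d)).restrict S).withDensity
        (fun p => ENNReal.ofReal (ν (p.1 - p.2)))) ^ 2 := by
  congr 1
  · exact aux_sqLintegral μ u
  · rw [← aux_sqLintegral]
    have hw : Measurable (fun p : Ed d × Ed d => ENNReal.ofReal (ν (p.1 - p.2))) :=
      ENNReal.measurable_ofReal.comp (hνm.comp (measurable_fst.sub measurable_snd))
    rw [lintegral_withDensity_eq_lintegral_mul_non_measurable _ hw
      (ae_of_all _ fun p => ENNReal.ofReal_lt_top)]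
    refine lintegral_congr fun p => ?_
    simp only [Pi.mul_apply]
    rw [ENNReal.ofReal_mul (sq_nonneg _), mul_comm]

/-- Proposition 2.6, first part: `V_ν(Ω|ℝ^d) ∩ L²(ℝ^d)` with the norm
`‖·‖_{V_ν(Ω|ℝ^d)}` (induced by the natural inner product) and `H_ν(Ω)` with `‖·‖_{H_ν(Ω)}`
are separable Hilbert spaces: every Cauchy sequence converges in the respective
(squared) norm to an element of the space, and there is a countable set which is dense. -/
theorem V_and_H_separable_Hilbert
    {d : ℕ} (Ω : Set (Ed d)) (hΩo : IsOpen Ω) (hΩb : IsBounded Ω)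
    (ν : Ed d → ℝ) (hν : NuLevy ν) :
    -- completeness of (V_ν(Ω|ℝ^d) ∩ L²(ℝ^d), ‖·‖_{V_ν(Ω|ℝ^d)})
    ((∀ useq : ℕ → Ed d → ℝ,
        (∀ n, Measurable (useq n) ∧ vNormSq Ω ν (useq n) < ⊤) →
        (∀ δ : ℝ, 0 < δ → ∃ N, ∀ m ≥ N, ∀ n ≥ N,
          vNormSq Ω ν (useq m - useq n) < ENNReal.ofReal δ) →
        ∃ u : Ed d → ℝ, Measurable u ∧ vNormSq Ω ν u < ⊤ ∧
          Tendsto (fun n => vNormSq Ω ν (useq n - u)) atTop (𝓝 0)) ∧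
      -- separability of (V_ν(Ω|ℝ^d) ∩ L²(ℝ^d), ‖·‖_{V_ν(Ω|ℝ^d)})
      (∃ D : ℕ → Ed d → ℝ, (∀ n, Measurable (D n) ∧ vNormSq Ω ν (D n) < ⊤) ∧
        ∀ u : Ed d → ℝ, Measurable u → vNormSq Ω ν u < ⊤ →
          ∀ δ : ℝ, 0 < δ → ∃ n, vNormSq Ω ν (D n - u) < ENNReal.ofReal δ))
    ∧
    -- completeness of (H_ν(Ω), ‖·‖_{H_ν(Ω)})
    ((∀ useq : ℕ → Ed d → ℝ,
        (∀ n, Measurable (useq n) ∧ hNormSq Ω ν (useq n) < ⊤) →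
        (∀ δ : ℝ, 0 < δ → ∃ N, ∀ m ≥ N, ∀ n ≥ N,
          hNormSq Ω ν (useq m - useq n) < ENNReal.ofReal δ) →
        ∃ u : Ed d → ℝ, Measurable u ∧ hNormSq Ω ν u < ⊤ ∧
          Tendsto (fun n => hNormSq Ω ν (useq n - u)) atTop (𝓝 0)) ∧
      -- separability of (H_ν(Ω), ‖·‖_{H_ν(Ω)})
      (∃ D : ℕ → Ed d → ℝ, (∀ n, Measurable (D n) ∧ hNormSq Ω ν (D n) < ⊤) ∧
        ∀ u : Ed d → ℝ, Measurable u → hNormSq Ω ν u < ⊤ →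
          ∀ δ : ℝ, 0 < δ → ∃ n, hNormSq Ω ν (D n - u) < ENNReal.ofReal δ)) := by
  obtain ⟨hνm, hνn, -, -, -⟩ := hν
  constructor
  · exact aux_core (volume : Measure (Ed d))
      (((volume : Measure (Ed d × Ed d)).restrict (crossSet Ω)).withDensity
        (fun p => ENNReal.ofReal (ν (p.1 - p.2))))
      ((withDensity_absolutelyContinuous _ _).trans
        (Measure.restrict_le_self).absolutelyContinuous)
      (vNormSq Ω ν) (fun u => aux_normEq (crossSet Ω) ν hνm volume u)
  · have hre : ((volume : Measure (Ed d × Ed d)).restrict (Ω ×ˢ Ω))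
        = (volume.restrict Ω).prod (volume.restrict Ω) := (Measure.prod_restrict Ω Ω).symm
    exact aux_core (volume.restrict Ω)
      (((volume : Measure (Ed d × Ed d)).restrict (Ω ×ˢ Ω)).withDensity
        (fun p => ENNReal.ofReal (ν (p.1 - p.2))))
      ((withDensity_absolutelyContinuous _ _).trans (le_of_eq hre).absolutelyContinuous)
      (hNormSq Ω ν) (fun u => aux_normEq (Ω ×ˢ Ω) ν hνm (volume.restrict Ω) u)


end NonlocalMosco
end
end

section
/- Assume (E) and (L) and assume the limit matrix A exists. Then the symmetric matrix A(x) has bounded coefficients and is uniformly elliptic: for every x ∈ ℝ^d and every ξ ∈ ℝ^d, d^{−1}Λ^{−1}|ξ|² ≤ ⟨A(x)ξ, ξ⟩ ≤ d^{−1}Λ|ξ|². -/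
open MeasureTheory ENNReal Filter Set Metric Topology Bornology

noncomputable section

namespace NonlocalMosco


section AuxEllip

open MeasureTheory Metric ENNReal Filter Set

variable {d : ℕ}

private lemma normsq_eq' (h : Ed d) : ‖h‖^2 = ∑ i, h i ^ 2 := by
  rw [EuclideanSpace.norm_eq, Real.sq_sqrt (by positivity)]
  simp [sq_abs]

private lemma coord_abs_le' (h : Ed d) (i : Fin d) : |h i| ≤ ‖h‖ := by
  rw [← Real.sqrt_sq_eq_abs, EuclideanSpace.norm_eq]
  apply Real.sqrt_le_sqrt
  have := Finset.single_le_sum (f := fun j => ‖h j‖^2) (fun j _ => by positivity)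
    (Finset.mem_univ i)
  simpa [sq_abs] using this

private lemma coord_mul_le' (h : Ed d) (i j : Fin d) : |h i * h j| ≤ ‖h‖^2 := by
  rw [abs_mul, sq]
  exact mul_le_mul (coord_abs_le' h i) (coord_abs_le' h j) (abs_nonneg _) (norm_nonneg _)

private lemma sum_mul_sq_le (h ξ : Ed d) : (∑ i, h i * ξ i)^2 ≤ ‖h‖^2 * ‖ξ‖^2 := by
  have hi : (∑ i, h i * ξ i) = inner ℝ h ξ := by
    simp [PiLp.inner_apply, RCLike.inner_apply, conj_trivial, mul_comm]
  rw [hi, ← sq_abs, ← mul_pow]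
  exact pow_le_pow_left₀ (abs_nonneg _) (abs_real_inner_le_norm h ξ) 2

private lemma coord_measurable' (i : Fin d) : Measurable (fun h : Ed d => h i) :=
  (EuclideanSpace.proj i).continuous.measurable

private lemma setIntegral_comp_isometry' (T : Ed d ≃ₗᵢ[ℝ] Ed d)
    (r : ℝ) (F : Ed d → ℝ) :
    ∫ h in ball (0:Ed d) r, F (T h) = ∫ h in ball (0:Ed d) r, F h := by
  have hball : T ⁻¹' (ball 0 r) = ball 0 r := by
    ext h; simp [mem_ball, dist_eq_norm, T.norm_map]
  calc ∫ h in ball (0:Ed d) r, F (T h)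
      = ∫ h in T ⁻¹' (ball 0 r), F (T h) := by rw [hball]
    _ = ∫ h in ball (0:Ed d) r, F h :=
        T.measurePreserving.setIntegral_preimage_emb
          T.toHomeomorph.measurableEmbedding _ _

/-- Integrability of `g · f` on `s` when `|f| ≲ q/‖h‖²` on `s` and `|g| ≲ ‖h‖²`. -/
private lemma int_quad (h0 : (volume : Measure (Ed d)) {0} = 0)
    (q f g : Ed d → ℝ) (hqn : ∀ x, 0 ≤ q x)
    (c k : ℝ) (hc : 0 ≤ c) (hk : 0 ≤ k) (s : Set (Ed d)) (hs : MeasurableSet s)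
    (hqint : IntegrableOn q s) (hfm : Measurable f)
    (hf : ∀ h ∈ s, h ≠ 0 → |f h| ≤ c * (q h / ‖h‖^2))
    (hgm : Measurable g) (hg : ∀ h : Ed d, |g h| ≤ k * ‖h‖^2) :
    IntegrableOn (fun h => g h * f h) s := by
  apply Integrable.mono' ((hqint.const_mul (k * c)))
  · exact (hgm.mul hfm).aestronglyMeasurable
  · have hae : ∀ᵐ h ∂(volume.restrict s), h ∈ s ∧ h ≠ 0 := by
      refine ((ae_restrict_mem hs).and (ae_restrict_of_ae ?_))
      rw [ae_iff]; simpa using h0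
    filter_upwards [hae] with h ⟨hhs, hne⟩
    have hn0 : ‖h‖ ≠ 0 := norm_ne_zero_iff.mpr hne
    have hpos : (0:ℝ) < ‖h‖^2 := by positivity
    rw [Real.norm_eq_abs, abs_mul]
    calc |g h| * |f h| ≤ (k * ‖h‖^2) * (c * (q h / ‖h‖^2)) := by
          apply mul_le_mul (hg h) (hf h hhs hne) (abs_nonneg _) (by positivity)
      _ = k * c * q h := by field_simp

private lemma M_integrable' (h0 : (volume : Measure (Ed d)) {0} = 0)
    (q : Ed d → ℝ) (hmeas : Measurable q)
    (hnn : ∀ x, 0 ≤ q x) (r : ℝ) (hint : IntegrableOn q (ball 0 r)) (i j : Fin d) :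
    IntegrableOn (fun h : Ed d => h i * h j * (q h / ‖h‖^2)) (ball 0 r) := by
  refine int_quad h0 q (fun h => q h / ‖h‖^2) (fun h => h i * h j) hnn 1 1
    zero_le_one zero_le_one _ measurableSet_ball hint
    (hmeas.div (measurable_norm.pow measurable_const)) (fun h _ hne => ?_)
    ((coord_measurable' i).mul (coord_measurable' j)) (fun h => by
      simpa using coord_mul_le' h i j)
  have hn0 : ‖h‖ ≠ 0 := norm_ne_zero_iff.mpr hne
  rw [one_mul, abs_div, abs_of_nonneg (hnn h), abs_of_nonneg (by positivity : (0:ℝ) ≤ ‖h‖^2)]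

private lemma radial_quadratic (hd : 0 < d) (q : Ed d → ℝ) (hmeas : Measurable q)
    (hnn : ∀ x, 0 ≤ q x) (hrad : ∀ x y : Ed d, ‖x‖ = ‖y‖ → q x = q y)
    (r : ℝ) (hint : IntegrableOn q (ball 0 r)) (ξ : Ed d) :
    ∫ h in ball (0:Ed d) r, (∑ i, h i * ξ i)^2 * (q h / ‖h‖^2)
      = ‖ξ‖^2 / d * ∫ h in ball (0:Ed d) r, q h := by
  haveI : Nontrivial (Ed d) := by
    refine ⟨EuclideanSpace.single ⟨0, hd⟩ (1:ℝ), 0, ?_⟩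
    intro hcontra
    have := congrArg (fun v : Ed d => v ⟨0, hd⟩) hcontra
    simp [EuclideanSpace.single_apply] at this
  have hzero : (volume : Measure (Ed d)) {0} = 0 := measure_singleton 0
  set M : Fin d → Fin d → ℝ := fun i j => ∫ h in ball (0:Ed d) r, h i * h j * (q h / ‖h‖^2)
    with hM
  have hMint := M_integrable' hzero q hmeas hnn r hint
  have hexp : ∀ h : Ed d, (∑ i, h i * ξ i)^2 * (q h / ‖h‖^2)
      = ∑ i, ∑ j, ξ i * ξ j * (h i * h j * (q h / ‖h‖^2)) := by
    intro h
    rw [sq, Finset.sum_mul_sum, Finset.sum_mul]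
    exact Finset.sum_congr rfl fun i _ => by
      rw [Finset.sum_mul]
      exact Finset.sum_congr rfl fun j _ => by ring
  have hsplit : ∫ h in ball (0:Ed d) r, (∑ i, h i * ξ i)^2 * (q h / ‖h‖^2)
      = ∑ i, ∑ j, ξ i * ξ j * M i j := by
    simp_rw [hexp]
    rw [integral_finset_sum _ (fun i _ => integrable_finset_sum _
      (fun j _ => ((hMint i j).const_mul _)))]
    exact Finset.sum_congr rfl fun i _ => by
      rw [integral_finset_sum _ (fun j _ => ((hMint i j).const_mul _))]
      exact Finset.sum_congr rfl fun j _ => integral_const_mul _ _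
  have hoff : ∀ i j, i ≠ j → M i j = 0 := by
    intro i j hij
    let T : Ed d ≃ₗᵢ[ℝ] Ed d := LinearIsometryEquiv.piLpCongrRight 2
      (fun k => if k = j then LinearIsometryEquiv.neg ℝ else LinearIsometryEquiv.refl ℝ ℝ)
    have hT : ∀ v : Ed d, ∀ k, T v k = if k = j then -(v k) else v k := by
      intro v k
      by_cases hk : k = j
      · subst hk; simp [T, LinearIsometryEquiv.piLpCongrRight_apply]
      · simp [T, LinearIsometryEquiv.piLpCongrRight_apply, hk]
    have key := setIntegral_comp_isometry' T r (fun h => h i * h j * (q h / ‖h‖^2))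
    have heq : ∀ h : Ed d, (T h) i * (T h) j * (q (T h) / ‖T h‖^2)
        = -(h i * h j * (q h / ‖h‖^2)) := by
      intro h
      rw [hT h i, hT h j, hrad (T h) h (T.norm_map h), T.norm_map, if_neg hij, if_pos rfl]
      ring
    simp only [heq] at key
    rw [integral_neg] at key
    have : M i j = - M i j := key.symm
    linarith
  have hdiag : ∀ i j, M i i = M j j := by
    intro i j
    let T : Ed d ≃ₗᵢ[ℝ] Ed d := LinearIsometryEquiv.piLpCongrLeft 2 ℝ ℝ (Equiv.swap i j)
    have hT : ∀ v : Ed d, ∀ k, T v k = v (Equiv.swap i j k) := by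
      intro v k
      simp [T, LinearIsometryEquiv.piLpCongrLeft_apply, Equiv.piCongrLeft']
    have key := setIntegral_comp_isometry' T r (fun h => h i * h i * (q h / ‖h‖^2))
    have heq : ∀ h : Ed d, (T h) i * (T h) i * (q (T h) / ‖T h‖^2)
        = h j * h j * (q h / ‖h‖^2) := by
      intro h
      rw [hrad (T h) h (T.norm_map h), T.norm_map, hT h i, Equiv.swap_apply_left]
    simp only [heq] at key
    exact key.symm
  have hsum : ∑ i, M i i = ∫ h in ball (0:Ed d) r, q h := by
    rw [← integral_finset_sum _ (fun i _ => hMint i i)]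
    apply integral_congr_ae
    have h0 : ∀ᵐ h : Ed d, h ≠ 0 := by
      rw [ae_iff]; simpa using hzero
    filter_upwards [ae_restrict_of_ae h0] with h hne
    have hn0 : ‖h‖ ≠ 0 := norm_ne_zero_iff.mpr hne
    have hpos : (0:ℝ) < ‖h‖^2 := by positivity
    rw [← Finset.sum_mul]
    have hss : ∑ i, h i * h i = ‖h‖^2 := by
      rw [normsq_eq']; exact Finset.sum_congr rfl fun i _ => (pow_two (h i)).symm
    rw [hss]
    field_simp
  have hdiagval : ∀ i, M i i = (∫ h in ball (0:Ed d) r, q h) / d := by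
    intro i
    have : ∑ j, M j j = d * M i i := by
      rw [Finset.sum_congr rfl (fun j _ => hdiag j i)]
      simp [Finset.sum_const, mul_comm]
    have hd' : (d:ℝ) ≠ 0 := Nat.cast_ne_zero.mpr hd.ne'
    have h2 : (d:ℝ) * M i i = ∫ h in ball (0:Ed d) r, q h := by rw [← this, hsum]
    field_simp
    linarith [h2]
  rw [hsplit]
  have : ∀ i, ∑ j, ξ i * ξ j * M i j = ξ i ^ 2 * ((∫ h in ball (0:Ed d) r, q h) / d) := by
    intro i
    rw [Finset.sum_eq_single i]
    · rw [hdiagval i]; ring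
    · intro j _ hji; rw [hoff i j (Ne.symm hji)]; ring
    · intro habs; exact absurd (Finset.mem_univ i) habs
  rw [Finset.sum_congr rfl (fun i _ => this i), ← Finset.sum_mul, ← normsq_eq']
  ring

private lemma ann_lintegral_bound (s : Set (Ed d)) (K : Ed d → ℝ≥0∞)
    (g : Ed d → ℝ) (c : ℝ) (hc : 0 ≤ c) (hg : ∀ h ∈ s, |g h| ≤ c) :
    ∀ h ∈ s, ENNReal.ofReal ‖g h * (K h).toReal‖ ≤ ENNReal.ofReal c * K h := by
  intro h hh
  rw [Real.norm_eq_abs, abs_mul, abs_of_nonneg ENNReal.toReal_nonneg]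
  calc ENNReal.ofReal (|g h| * (K h).toReal)
      ≤ ENNReal.ofReal (c * (K h).toReal) :=
        ENNReal.ofReal_le_ofReal (mul_le_mul_of_nonneg_right (hg h hh) ENNReal.toReal_nonneg)
    _ = ENNReal.ofReal c * ENNReal.ofReal ((K h).toReal) := ENNReal.ofReal_mul hc
    _ ≤ ENNReal.ofReal c * K h := mul_le_mul_right ENNReal.ofReal_toReal_le _

private lemma int_ann (s : Set (Ed d)) (hs : MeasurableSet s)
    (K : Ed d → ℝ≥0∞) (hKm : Measurable K) (hKfin : ∫⁻ h in s, K h ≠ ⊤)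
    (g : Ed d → ℝ) (hgm : Measurable g) (c : ℝ) (hc : 0 ≤ c)
    (hg : ∀ h ∈ s, |g h| ≤ c) :
    IntegrableOn (fun h => g h * (K h).toReal) s := by
  refine ⟨(hgm.mul hKm.ennreal_toReal).aestronglyMeasurable, ?_⟩
  rw [hasFiniteIntegral_iff_norm]
  calc ∫⁻ h in s, ENNReal.ofReal ‖g h * (K h).toReal‖
      ≤ ∫⁻ h in s, ENNReal.ofReal c * K h :=
        setLIntegral_mono (hKm.const_mul _) (ann_lintegral_bound s K g c hc hg)
    _ = ENNReal.ofReal c * ∫⁻ h in s, K h := lintegral_const_mul _ hKm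
    _ < ⊤ := ENNReal.mul_lt_top ENNReal.ofReal_lt_top (lt_top_iff_ne_top.mpr hKfin)

private lemma val_ann (s : Set (Ed d)) (hs : MeasurableSet s)
    (K : Ed d → ℝ≥0∞) (hKm : Measurable K) (hKfin : ∫⁻ h in s, K h ≠ ⊤)
    (g : Ed d → ℝ) (hgm : Measurable g) (c : ℝ) (hc : 0 ≤ c)
    (hg : ∀ h ∈ s, |g h| ≤ c) (hgnn : ∀ h, 0 ≤ g h) :
    ∫ h in s, g h * (K h).toReal ≤ (ENNReal.ofReal c * ∫⁻ h in s, K h).toReal := by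
  rw [integral_eq_lintegral_of_nonneg_ae
      (Filter.Eventually.of_forall (fun h => mul_nonneg (hgnn h) ENNReal.toReal_nonneg))
      (hgm.mul hKm.ennreal_toReal).aestronglyMeasurable]
  apply ENNReal.toReal_mono (ENNReal.mul_ne_top ENNReal.ofReal_ne_top hKfin)
  calc ∫⁻ h in s, ENNReal.ofReal (g h * (K h).toReal)
      ≤ ∫⁻ h in s, ENNReal.ofReal c * K h := by
        apply setLIntegral_mono (hKm.const_mul _)
        intro h hh
        exact le_trans (ENNReal.ofReal_le_ofReal ((Real.norm_eq_abs _) ▸ le_abs_self _))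
          (ann_lintegral_bound s K g c hc hg h hh)
    _ = ENNReal.ofReal c * ∫⁻ h in s, K h := lintegral_const_mul _ hKm

end AuxEllip

/-- Proposition 3.1: under (E) and (L), the limit matrix `A(x)` has
bounded coefficients and is uniformly elliptic:
`d⁻¹Λ⁻¹|ξ|² ≤ ⟨A(x)ξ,ξ⟩ ≤ d⁻¹Λ|ξ|²` for all `x, ξ ∈ ℝ^d`. -/
theorem matrix_uniformly_elliptic
    {d : ℕ}
    (ρ : ℝ → Ed d → ℝ) (hρ : IsApproxIdentityFamily ρ)
    (J : ℝ → Ed d → Ed d → ℝ≥0∞) (hJ : IsKernelFamily J)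
    (Λ : ℝ) (hE : CondE ρ J Λ) (hL : CondL J)
    (A : Ed d → Matrix (Fin d) (Fin d) ℝ) (hA : MatrixLimit J A) :
    ∀ x ξ : Ed d,
      (d : ℝ)⁻¹ * Λ⁻¹ * ‖ξ‖^2 ≤ ∑ i, ∑ j, A x i j * ξ j * ξ i ∧
      ∑ i, ∑ j, A x i j * ξ j * ξ i ≤ (d : ℝ)⁻¹ * Λ * ‖ξ‖^2 := by
  intro x ξ
  by_cases hd0 : d = 0
  · subst hd0
    have hξ : ξ = 0 := by ext i; exact i.elim0
    subst hξ
    simp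
  have hd : 0 < d := Nat.pos_of_ne_zero hd0
  haveI : Nontrivial (Ed d) := by
    refine ⟨EuclideanSpace.single ⟨0, hd⟩ (1:ℝ), 0, ?_⟩
    intro hc
    have := congrArg (fun v : Ed d => v ⟨0, hd⟩) hc
    simp [EuclideanSpace.single_apply] at this
  have hdR : (0:ℝ) < d := Nat.cast_pos.mpr hd
  have hzero : (volume : Measure (Ed d)) {0} = 0 := measure_singleton 0
  have h0ae : ∀ᵐ h : Ed d, h ≠ 0 := by rw [ae_iff]; simpa using hzero
  obtain ⟨hΛ, hEE⟩ := hE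
  have hΛ0 : (0:ℝ) < Λ := lt_of_lt_of_le one_pos hΛ
  obtain ⟨δ, hδ, hconv⟩ := hA
  have hδ₀ : 0 < min δ 1 := lt_min hδ one_pos
  have hδ₀le1 : min δ 1 ≤ 1 := min_le_right _ _
  have hδ₀leδ : min δ 1 ≤ δ := min_le_left _ _
  set δ₀ : ℝ := min δ 1 with hδ₀def
  set φ : Filter ℝ := nhdsWithin 2 (Set.Ioo (0:ℝ) 2) with hφdef
  haveI hφne : φ.NeBot := by
    rw [hφdef, ← mem_closure_iff_nhdsWithin_neBot, closure_Ioo (by norm_num : (0:ℝ) ≠ 2)]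
    constructor <;> norm_num
  have hρreg := hρ.1
  have hρconc := hρ.2.1
  have hρint : ∀ ε ∈ Set.Ioo (0:ℝ) 2, Integrable (ρ ε) := by
    intro ε hε
    by_contra hni
    have h1 := (hρreg ε hε).2.2.2
    rw [integral_undef hni] at h1
    norm_num at h1
  -- measurability of the kernel section
  have hKm : ∀ α ∈ Set.Ioo (0:ℝ) 2, Measurable (fun h : Ed d => J α x (x+h)) := by
    intro α hα
    exact (hJ α hα).1.comp (measurable_const.prodMk (measurable_const.add measurable_id))
  have hfm : ∀ α ∈ Set.Ioo (0:ℝ) 2, Measurable (fun h : Ed d => (J α x (x+h)).toReal) :=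
    fun α hα => (hKm α hα).ennreal_toReal
  -- pointwise comparability from (E)
  have hbound : ∀ α ∈ Set.Ioo (0:ℝ) 2, ∀ h : Ed d, h ≠ 0 → ‖h‖ ≤ 1 →
      Λ⁻¹ * (ρ (2-α) h / ‖h‖^2) ≤ (J α x (x+h)).toReal ∧
      (J α x (x+h)).toReal ≤ Λ * (ρ (2-α) h / ‖h‖^2) := by
    intro α hα h hne hle
    have hεα : (2-α) ∈ Set.Ioo (0:ℝ) 2 := ⟨by linarith [hα.2], by linarith [hα.1]⟩
    have hxy : x ≠ x + h := by
      intro hc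
      exact hne (left_eq_add.mp hc)
    have hnorm : ‖x - (x+h)‖ = ‖h‖ := by
      rw [show x - (x+h) = -h by abel, norm_neg]
    have hnu : nuA ρ α (x - (x+h)) = ρ (2-α) h / ‖h‖^2 := by
      unfold nuA
      rw [(hρreg (2-α) hεα).2.2.1 (x - (x+h)) h hnorm, hnorm]
    have hnn : 0 ≤ ρ (2-α) h / ‖h‖^2 :=
      div_nonneg ((hρreg (2-α) hεα).2.1 h) (by positivity)
    obtain ⟨hlow, hup⟩ := hEE α hα x (x+h) hxy (by rwa [hnorm])
    rw [hnu] at hlow hup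
    have hfin : J α x (x+h) ≠ ⊤ := ne_top_of_le_ne_top ENNReal.ofReal_ne_top hup
    constructor
    · have := ENNReal.toReal_mono hfin hlow
      rwa [ENNReal.toReal_ofReal (mul_nonneg (inv_nonneg.mpr hΛ0.le) hnn)] at this
    · have := ENNReal.toReal_mono ENNReal.ofReal_ne_top hup
      rwa [ENNReal.toReal_ofReal (mul_nonneg hΛ0.le hnn)] at this
  -- convergence of the quadratic-form sums
  have hQtend : Tendsto (fun α => ∑ i, ∑ j,
      (∫ h in ball (0:Ed d) δ, h i * h j * (J α x (x+h)).toReal) * ξ j * ξ i) φ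
      (nhds (∑ i, ∑ j, A x i j * ξ j * ξ i)) := by
    apply tendsto_finset_sum
    intro i _
    apply tendsto_finset_sum
    intro j _
    exact ((hconv x i j).mul_const _).mul_const _
  -- vanishing tail of the kernels
  have hBtend : Tendsto (fun α => ⨆ x' : Ed d,
      ∫⁻ h in {h : Ed d | δ₀/2 < ‖h‖}, J α x' (x'+h)) φ (nhds 0) :=
    hL (δ₀/2) (by positivity)
  have hBev : ∀ᶠ α in φ, (⨆ x' : Ed d,
      ∫⁻ h in {h : Ed d | δ₀/2 < ‖h‖}, J α x' (x'+h)) ≤ 1 :=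
    (hBtend.eventually_lt_const zero_lt_one).mono fun α hα => hα.le
  have hEtend : Tendsto (fun α => (ENNReal.ofReal (δ^2 * ‖ξ‖^2) *
      (⨆ x' : Ed d, ∫⁻ h in {h : Ed d | δ₀/2 < ‖h‖}, J α x' (x'+h))).toReal) φ (nhds 0) := by
    have h1 : Tendsto (fun α => ENNReal.ofReal (δ^2 * ‖ξ‖^2) *
        (⨆ x' : Ed d, ∫⁻ h in {h : Ed d | δ₀/2 < ‖h‖}, J α x' (x'+h))) φ
        (nhds (ENNReal.ofReal (δ^2 * ‖ξ‖^2) * 0)) :=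
      ENNReal.Tendsto.const_mul hBtend (Or.inr ENNReal.ofReal_ne_top)
    rw [mul_zero] at h1
    have h2 : Tendsto (fun α => (ENNReal.ofReal (δ^2 * ‖ξ‖^2) *
        (⨆ x' : Ed d, ∫⁻ h in {h : Ed d | δ₀/2 < ‖h‖}, J α x' (x'+h))).toReal) φ
        (nhds ((0:ℝ≥0∞).toReal)) := (ENNReal.tendsto_toReal (by simp)).comp h1
    rw [ENNReal.toReal_zero] at h2
    exact h2
  -- concentration: the mass in the small ball tends to 1
  have htail : Tendsto (fun α => ∫ h in {h : Ed d | δ₀/2 < ‖h‖}, ρ (2-α) h) φ (nhds 0) := by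
    have hmap : Tendsto (fun α : ℝ => 2 - α) φ (nhdsWithin 0 (Set.Ioo (0:ℝ) 2)) := by
      apply tendsto_nhdsWithin_of_tendsto_nhds_of_eventually_within
      · have hcont : Continuous (fun α : ℝ => (2:ℝ) - α) := continuous_const.sub continuous_id
        have h2 : Tendsto (fun α : ℝ => 2 - α) (nhds 2) (nhds 0) := by
          simpa using hcont.tendsto (2:ℝ)
        exact h2.mono_left nhdsWithin_le_nhds
      · filter_upwards [self_mem_nhdsWithin] with α hα
        exact ⟨by linarith [hα.2], by linarith [hα.1]⟩
    exact (hρconc (δ₀/2) (by positivity)).comp hmap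
  have hItend : Tendsto (fun α => ∫ h in ball (0:Ed d) δ₀, ρ (2-α) h) φ (nhds 1) := by
    have hsub : ∀ᶠ α in φ, 0 ≤ 1 - (∫ h in ball (0:Ed d) δ₀, ρ (2-α) h) ∧
        1 - (∫ h in ball (0:Ed d) δ₀, ρ (2-α) h) ≤
          ∫ h in {h : Ed d | δ₀/2 < ‖h‖}, ρ (2-α) h := by
      filter_upwards [self_mem_nhdsWithin] with α hα
      have hεα : (2-α) ∈ Set.Ioo (0:ℝ) 2 := ⟨by linarith [hα.2], by linarith [hα.1]⟩
      have hint := hρint _ hεα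
      have hnn := (hρreg _ hεα).2.1
      have hsplit : (∫ h in ball (0:Ed d) δ₀, ρ (2-α) h) +
          (∫ h in (ball (0:Ed d) δ₀)ᶜ, ρ (2-α) h) = 1 := by
        rw [integral_add_compl measurableSet_ball hint]
        exact (hρreg _ hεα).2.2.2
      constructor
      · have h1 : 0 ≤ ∫ h in (ball (0:Ed d) δ₀)ᶜ, ρ (2-α) h :=
          setIntegral_nonneg measurableSet_ball.compl (fun h _ => hnn h)
        linarith
      · have h2 : (∫ h in (ball (0:Ed d) δ₀)ᶜ, ρ (2-α) h) ≤
            ∫ h in {h : Ed d | δ₀/2 < ‖h‖}, ρ (2-α) h := by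
          apply setIntegral_mono_set hint.integrableOn
            (Filter.Eventually.of_forall (fun h => hnn h))
          apply HasSubset.Subset.eventuallyLE
          intro h hh
          simp only [mem_compl_iff, mem_ball, dist_zero_right, not_lt] at hh
          exact lt_of_lt_of_le (by linarith) hh
        linarith
    have hz : Tendsto (fun α => 1 - (∫ h in ball (0:Ed d) δ₀, ρ (2-α) h)) φ (nhds 0) :=
      squeeze_zero' (hsub.mono fun α hα => hα.1) (hsub.mono fun α hα => hα.2) htail
    have h3 := tendsto_const_nhds (x := (1:ℝ)) (f := φ) |>.sub hz
    simp only [_root_.sub_sub_cancel, sub_zero] at h3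
    exact h3
  -- the key eventual two-sided estimate
  have hkey : ∀ᶠ α in φ,
      Λ⁻¹ * (‖ξ‖^2 / d * ∫ h in ball (0:Ed d) δ₀, ρ (2-α) h) ≤
        (∑ i, ∑ j, (∫ h in ball (0:Ed d) δ, h i * h j * (J α x (x+h)).toReal) * ξ j * ξ i) ∧
      (∑ i, ∑ j, (∫ h in ball (0:Ed d) δ, h i * h j * (J α x (x+h)).toReal) * ξ j * ξ i) ≤
        Λ * (‖ξ‖^2 / d * ∫ h in ball (0:Ed d) δ₀, ρ (2-α) h) +
        (ENNReal.ofReal (δ^2 * ‖ξ‖^2) *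
          (⨆ x' : Ed d, ∫⁻ h in {h : Ed d | δ₀/2 < ‖h‖}, J α x' (x'+h))).toReal := by
    filter_upwards [self_mem_nhdsWithin, hBev] with α hα hB
    have hεα : (2-α) ∈ Set.Ioo (0:ℝ) 2 := ⟨by linarith [hα.2], by linarith [hα.1]⟩
    have hqm : Measurable (ρ (2-α)) := (hρreg _ hεα).1
    have hqn : ∀ h, 0 ≤ ρ (2-α) h := (hρreg _ hεα).2.1
    have hqrad := (hρreg _ hεα).2.2.1
    have hqint : Integrable (ρ (2-α)) := hρint _ hεα
    have hfm' := hfm α hα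
    have hKm' := hKm α hα
    have hfb := hbound α hα
    have hfnn : ∀ h : Ed d, 0 ≤ (J α x (x+h)).toReal := fun h => ENNReal.toReal_nonneg
    -- measurability of the polynomial weights
    have hgm2 : Measurable (fun h : Ed d => (∑ i, h i * ξ i)^2) :=
      ((Finset.measurable_sum Finset.univ
        (fun i _ => (coord_measurable' i).mul_const (ξ i))).pow_const 2)
    have hgmij : ∀ i j : Fin d, Measurable (fun h : Ed d => h i * h j) :=
      fun i j => (coord_measurable' i).mul (coord_measurable' j)
    -- upper bound for f on the small ball
    have hfub : ∀ h ∈ ball (0:Ed d) δ₀, h ≠ 0 →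
        |(J α x (x+h)).toReal| ≤ Λ * (ρ (2-α) h / ‖h‖^2) := by
      intro h hh hne
      rw [abs_of_nonneg (hfnn h)]
      exact (hfb h hne (le_of_lt (lt_of_lt_of_le (mem_ball_zero_iff.mp hh) hδ₀le1))).2
    -- integrability on the small ball
    have hRint : IntegrableOn (fun h : Ed d => (∑ i, h i * ξ i)^2 * (J α x (x+h)).toReal)
        (ball 0 δ₀) := by
      refine int_quad hzero (ρ (2-α)) _ _ hqn Λ (‖ξ‖^2) hΛ0.le (sq_nonneg _) _
        measurableSet_ball hqint.integrableOn hfm' hfub hgm2 (fun h => ?_)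
      rw [abs_of_nonneg (sq_nonneg _), mul_comm]
      exact sum_mul_sq_le h ξ
    have hMint2 : ∀ i j : Fin d,
        IntegrableOn (fun h : Ed d => h i * h j * (J α x (x+h)).toReal) (ball 0 δ₀) := by
      intro i j
      refine int_quad hzero (ρ (2-α)) _ _ hqn Λ 1 hΛ0.le zero_le_one _
        measurableSet_ball hqint.integrableOn hfm' hfub (hgmij i j) (fun h => by
          simpa using coord_mul_le' h i j)
    -- the annulus
    have hAnmeas : MeasurableSet (ball (0:Ed d) δ \ ball 0 δ₀) :=
      measurableSet_ball.diff measurableSet_ball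
    have hAnfin : (∫⁻ h in ball (0:Ed d) δ \ ball 0 δ₀, J α x (x+h)) ≠ ⊤ := by
      have hsub2 : ball (0:Ed d) δ \ ball 0 δ₀ ⊆ {h : Ed d | δ₀/2 < ‖h‖} := by
        intro h hh
        have : δ₀ ≤ ‖h‖ := by
          have := hh.2
          simpa [mem_ball, dist_zero_right, not_lt] using this
        exact lt_of_lt_of_le (by linarith) this
      have h1 : (∫⁻ h in ball (0:Ed d) δ \ ball 0 δ₀, J α x (x+h)) ≤ 1 := by
        calc (∫⁻ h in ball (0:Ed d) δ \ ball 0 δ₀, J α x (x+h))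
            ≤ ∫⁻ h in {h : Ed d | δ₀/2 < ‖h‖}, J α x (x+h) := lintegral_mono_set hsub2
          _ ≤ ⨆ x' : Ed d, ∫⁻ h in {h : Ed d | δ₀/2 < ‖h‖}, J α x' (x'+h) :=
              le_iSup (fun x' : Ed d => ∫⁻ h in {h : Ed d | δ₀/2 < ‖h‖}, J α x' (x'+h)) x
          _ ≤ 1 := hB
      exact (lt_of_le_of_lt h1 ENNReal.one_lt_top).ne
    have hbddAn : ∀ h ∈ ball (0:Ed d) δ \ ball 0 δ₀, |(∑ i, h i * ξ i)^2| ≤ δ^2 * ‖ξ‖^2 := by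
      intro h hh
      rw [abs_of_nonneg (sq_nonneg _)]
      calc (∑ i, h i * ξ i)^2 ≤ ‖h‖^2 * ‖ξ‖^2 := sum_mul_sq_le h ξ
        _ ≤ δ^2 * ‖ξ‖^2 := by
            apply mul_le_mul_of_nonneg_right _ (sq_nonneg _)
            exact pow_le_pow_left₀ (norm_nonneg _) (le_of_lt (mem_ball_zero_iff.mp hh.1)) 2
    have hWint : IntegrableOn (fun h : Ed d => (∑ i, h i * ξ i)^2 * (J α x (x+h)).toReal)
        (ball (0:Ed d) δ \ ball 0 δ₀) :=
      int_ann _ hAnmeas _ hKm' hAnfin _ hgm2 (δ^2 * ‖ξ‖^2)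
        (by positivity) hbddAn
    have hMintAn : ∀ i j : Fin d,
        IntegrableOn (fun h : Ed d => h i * h j * (J α x (x+h)).toReal)
          (ball (0:Ed d) δ \ ball 0 δ₀) := by
      intro i j
      refine int_ann _ hAnmeas _ hKm' hAnfin _ (hgmij i j) (δ^2) (by positivity) ?_
      intro h hh
      calc |h i * h j| ≤ ‖h‖^2 := coord_mul_le' h i j
        _ ≤ δ^2 := pow_le_pow_left₀ (norm_nonneg _) (le_of_lt (mem_ball_zero_iff.mp hh.1)) 2
    -- annulus contribution bounds
    have hWnn : 0 ≤ ∫ h in ball (0:Ed d) δ \ ball 0 δ₀,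
        (∑ i, h i * ξ i)^2 * (J α x (x+h)).toReal :=
      setIntegral_nonneg hAnmeas (fun h _ => mul_nonneg (sq_nonneg _) (hfnn h))
    have hWub : (∫ h in ball (0:Ed d) δ \ ball 0 δ₀,
        (∑ i, h i * ξ i)^2 * (J α x (x+h)).toReal) ≤
        (ENNReal.ofReal (δ^2 * ‖ξ‖^2) *
          (⨆ x' : Ed d, ∫⁻ h in {h : Ed d | δ₀/2 < ‖h‖}, J α x' (x'+h))).toReal := by
      have h1 := val_ann _ hAnmeas _ hKm' hAnfin _ hgm2 (δ^2 * ‖ξ‖^2)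
        (by positivity) hbddAn (fun h => sq_nonneg _)
      apply le_trans h1
      apply ENNReal.toReal_mono
      · refine ENNReal.mul_ne_top ENNReal.ofReal_ne_top ?_
        exact (lt_of_le_of_lt hB ENNReal.one_lt_top).ne
      · apply mul_le_mul_right
        have hsub2 : ball (0:Ed d) δ \ ball 0 δ₀ ⊆ {h : Ed d | δ₀/2 < ‖h‖} := by
          intro h hh
          have : δ₀ ≤ ‖h‖ := by
            have := hh.2
            simpa [mem_ball, dist_zero_right, not_lt] using this
          exact lt_of_lt_of_le (by linarith) this
        calc (∫⁻ h in ball (0:Ed d) δ \ ball 0 δ₀, J α x (x+h))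
            ≤ ∫⁻ h in {h : Ed d | δ₀/2 < ‖h‖}, J α x (x+h) := lintegral_mono_set hsub2
          _ ≤ ⨆ x' : Ed d, ∫⁻ h in {h : Ed d | δ₀/2 < ‖h‖}, J α x' (x'+h) :=
              le_iSup (fun x' : Ed d => ∫⁻ h in {h : Ed d | δ₀/2 < ‖h‖}, J α x' (x'+h)) x
    -- decomposition of the big ball
    have hcup : ball (0:Ed d) δ = ball 0 δ₀ ∪ (ball (0:Ed d) δ \ ball 0 δ₀) :=
      (union_diff_cancel (ball_subset_ball hδ₀leδ)).symm
    -- the sum equals the integral over the big ball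
    have hQeq : (∑ i, ∑ j,
        (∫ h in ball (0:Ed d) δ, h i * h j * (J α x (x+h)).toReal) * ξ j * ξ i) =
        ∫ h in ball (0:Ed d) δ, (∑ i, h i * ξ i)^2 * (J α x (x+h)).toReal := by
      have hint : ∀ i j : Fin d,
          IntegrableOn (fun h : Ed d => h i * h j * (J α x (x+h)).toReal) (ball 0 δ) := by
        intro i j
        rw [hcup]
        exact (hMint2 i j).union (hMintAn i j)
      have hexp2 : ∀ h : Ed d, (∑ i, h i * ξ i)^2 * (J α x (x+h)).toReal =
          ∑ i, ∑ j, (h i * h j * (J α x (x+h)).toReal) * ξ j * ξ i := by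
        intro h
        rw [sq, Finset.sum_mul_sum, Finset.sum_mul]
        exact Finset.sum_congr rfl fun i _ => by
          rw [Finset.sum_mul]
          exact Finset.sum_congr rfl fun j _ => by ring
      simp_rw [hexp2]
      rw [integral_finset_sum _ (fun i _ => integrable_finset_sum _
        (fun j _ => (((hint i j).mul_const (ξ j)).mul_const (ξ i))))]
      refine Finset.sum_congr rfl fun i _ => ?_
      rw [integral_finset_sum _ (fun j _ => (((hint i j).mul_const (ξ j)).mul_const (ξ i)))]
      refine Finset.sum_congr rfl fun j _ => ?_
      rw [integral_mul_const, integral_mul_const]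
    -- split into small ball plus annulus
    have hQsplit : (∫ h in ball (0:Ed d) δ, (∑ i, h i * ξ i)^2 * (J α x (x+h)).toReal) =
        (∫ h in ball (0:Ed d) δ₀, (∑ i, h i * ξ i)^2 * (J α x (x+h)).toReal) +
        ∫ h in ball (0:Ed d) δ \ ball 0 δ₀, (∑ i, h i * ξ i)^2 * (J α x (x+h)).toReal := by
      have hsplit0 : (∫ h in (ball (0:Ed d) δ₀ ∪ (ball (0:Ed d) δ \ ball 0 δ₀)),
          (∑ i, h i * ξ i)^2 * (J α x (x+h)).toReal) =
          (∫ h in ball (0:Ed d) δ₀, (∑ i, h i * ξ i)^2 * (J α x (x+h)).toReal) +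
          ∫ h in ball (0:Ed d) δ \ ball 0 δ₀, (∑ i, h i * ξ i)^2 * (J α x (x+h)).toReal :=
        setIntegral_union disjoint_sdiff_self_right hAnmeas hRint hWint
      rw [← hcup] at hsplit0
      exact hsplit0
    -- compare with the model kernel on the small ball
    have hGint : IntegrableOn (fun h : Ed d => (∑ i, h i * ξ i)^2 * (ρ (2-α) h / ‖h‖^2))
        (ball 0 δ₀) := by
      refine int_quad hzero (ρ (2-α)) _ _ hqn 1 (‖ξ‖^2) zero_le_one (sq_nonneg _) _
        measurableSet_ball hqint.integrableOn
        (hqm.div (measurable_norm.pow measurable_const)) (fun h _ hne => ?_) hgm2 (fun h => ?_)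
      · rw [one_mul, abs_of_nonneg (div_nonneg (hqn h) (by positivity))]
      · rw [abs_of_nonneg (sq_nonneg _), mul_comm]
        exact sum_mul_sq_le h ξ
    have hcmp : Λ⁻¹ * (∫ h in ball (0:Ed d) δ₀, (∑ i, h i * ξ i)^2 * (ρ (2-α) h / ‖h‖^2)) ≤
        (∫ h in ball (0:Ed d) δ₀, (∑ i, h i * ξ i)^2 * (J α x (x+h)).toReal) ∧
        (∫ h in ball (0:Ed d) δ₀, (∑ i, h i * ξ i)^2 * (J α x (x+h)).toReal) ≤
        Λ * ∫ h in ball (0:Ed d) δ₀, (∑ i, h i * ξ i)^2 * (ρ (2-α) h / ‖h‖^2) := by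
      have hae : ∀ᵐ h ∂(volume.restrict (ball (0:Ed d) δ₀)), h ∈ ball (0:Ed d) δ₀ ∧ h ≠ 0 :=
        (ae_restrict_mem measurableSet_ball).and (ae_restrict_of_ae h0ae)
      constructor
      · rw [← integral_const_mul]
        apply integral_mono_ae (hGint.const_mul _) hRint
        filter_upwards [hae] with h ⟨hh, hne⟩
        have hb := (hfb h hne (le_of_lt (lt_of_lt_of_le (mem_ball_zero_iff.mp hh) hδ₀le1))).1
        calc Λ⁻¹ * ((∑ i, h i * ξ i)^2 * (ρ (2-α) h / ‖h‖^2))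
            = (∑ i, h i * ξ i)^2 * (Λ⁻¹ * (ρ (2-α) h / ‖h‖^2)) := by ring
          _ ≤ (∑ i, h i * ξ i)^2 * (J α x (x+h)).toReal :=
              mul_le_mul_of_nonneg_left hb (sq_nonneg _)
      · rw [← integral_const_mul]
        apply integral_mono_ae hRint (hGint.const_mul _)
        filter_upwards [hae] with h ⟨hh, hne⟩
        have hb := (hfb h hne (le_of_lt (lt_of_lt_of_le (mem_ball_zero_iff.mp hh) hδ₀le1))).2
        calc (∑ i, h i * ξ i)^2 * (J α x (x+h)).toReal
            ≤ (∑ i, h i * ξ i)^2 * (Λ * (ρ (2-α) h / ‖h‖^2)) :=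
              mul_le_mul_of_nonneg_left hb (sq_nonneg _)
          _ = Λ * ((∑ i, h i * ξ i)^2 * (ρ (2-α) h / ‖h‖^2)) := by ring
    -- the radial computation
    have hG : (∫ h in ball (0:Ed d) δ₀, (∑ i, h i * ξ i)^2 * (ρ (2-α) h / ‖h‖^2)) =
        ‖ξ‖^2 / d * ∫ h in ball (0:Ed d) δ₀, ρ (2-α) h :=
      radial_quadratic hd (ρ (2-α)) hqm hqn hqrad δ₀ hqint.integrableOn ξ
    rw [hQeq, hQsplit]
    rw [hG] at hcmp
    exact ⟨by linarith [hcmp.1, hWnn], by linarith [hcmp.2, hWub]⟩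
  -- pass to the limit
  constructor
  · have hflim : Tendsto (fun α => Λ⁻¹ * (‖ξ‖^2 / d *
        ∫ h in ball (0:Ed d) δ₀, ρ (2-α) h)) φ (nhds (Λ⁻¹ * (‖ξ‖^2 / d * 1))) :=
      tendsto_const_nhds.mul (tendsto_const_nhds.mul hItend)
    have hle := le_of_tendsto_of_tendsto hflim hQtend (hkey.mono fun α hα => hα.1)
    calc (d:ℝ)⁻¹ * Λ⁻¹ * ‖ξ‖^2 = Λ⁻¹ * (‖ξ‖^2 / d * 1) := by
          rw [mul_one, div_eq_inv_mul]; ring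
      _ ≤ _ := hle
  · have hglim : Tendsto (fun α => Λ * (‖ξ‖^2 / d *
        ∫ h in ball (0:Ed d) δ₀, ρ (2-α) h) +
        (ENNReal.ofReal (δ^2 * ‖ξ‖^2) *
          (⨆ x' : Ed d, ∫⁻ h in {h : Ed d | δ₀/2 < ‖h‖}, J α x' (x'+h))).toReal) φ
        (nhds (Λ * (‖ξ‖^2 / d * 1) + 0)) :=
      (tendsto_const_nhds.mul (tendsto_const_nhds.mul hItend)).add hEtend
    have hle := le_of_tendsto_of_tendsto hQtend hglim (hkey.mono fun α hα => hα.2)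
    calc (∑ i, ∑ j, A x i j * ξ j * ξ i) ≤ Λ * (‖ξ‖^2 / d * 1) + 0 := hle
      _ = (d:ℝ)⁻¹ * Λ * ‖ξ‖^2 := by
          rw [add_zero, mul_one, div_eq_inv_mul]; ring


end NonlocalMosco
end
end

section
/- Let Ω ⊂ ℝ^d be open, x₀ ∈ ∂Ω, r > 0, k > 0, and let γ : ℝ^{d−1} → ℝ be Lipschitz with constant k such that Ω ∩ B_r(x₀) = {x ∈ B_r(x₀) : x_d > γ(x′)}, writing x = (x′,x_d). Let τ > 1+k, 0 < ε < r/(2(1+τ)) and z ∈ B₁(0), and set Ω^z_ε = Ω + ε(τ e_d − z), where e_d is the d-th standard basis vector. Then Ω^z_ε ∩ B_{r/2}(x₀) ⊂ Ω ∩ B_r(x₀). -/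
open MeasureTheory ENNReal Filter Set Metric Topology Bornology

noncomputable section

namespace NonlocalMosco

lemma coord_le_norm' {n : ℕ} (z : EuclideanSpace ℝ (Fin n)) (j : Fin n) : |z j| ≤ ‖z‖ := by
  rw [EuclideanSpace.norm_eq, ← Real.sqrt_sq_eq_abs]
  apply Real.sqrt_le_sqrt
  have := Finset.single_le_sum (f := fun i => ‖z i‖ ^ 2) (fun i _ => by positivity)
    (Finset.mem_univ j)
  simpa [Real.norm_eq_abs, sq_abs] using this

lemma proj_norm_le' {d : ℕ} (c : ℝ) (z : EuclideanSpace ℝ (Fin (d+1)))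
    (w : EuclideanSpace ℝ (Fin d)) (hw : ∀ i, w i = c * z i.castSucc) :
    ‖w‖ ≤ |c| * ‖z‖ := by
  rw [EuclideanSpace.norm_eq, EuclideanSpace.norm_eq,
    ← Real.sqrt_sq_eq_abs, ← Real.sqrt_mul (sq_nonneg c)]
  apply Real.sqrt_le_sqrt
  rw [Finset.mul_sum]
  have h1 : ∑ i : Fin d, ‖w i‖ ^ 2 = ∑ i : Fin d, c ^ 2 * ‖z i.castSucc‖ ^ 2 := by
    simp [hw, Real.norm_eq_abs, abs_mul, mul_pow, sq_abs]
  rw [h1]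
  have h2 : ∑ j : Fin (d+1), c ^ 2 * ‖z j‖ ^ 2
      = ∑ i : Fin d, c ^ 2 * ‖z i.castSucc‖ ^ 2 + c ^ 2 * ‖z (Fin.last d)‖ ^ 2 :=
    Fin.sum_univ_castSucc _
  rw [h2]
  nlinarith [sq_nonneg (c * ‖z (Fin.last d)‖)]

/-- Lemma 2.9, geometric observation: with the Lipschitz graph
representation of `Ω` near `x₀ ∈ ∂Ω`, `τ > 1+k`, `0 < ε < r/(2(1+τ))` and `z ∈ B₁(0)`,
the shifted set `Ω^z_ε = Ω + ε(τe_d − z)` satisfies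
`Ω^z_ε ∩ B_{r/2}(x₀) ⊆ Ω ∩ B_r(x₀)`. -/
theorem shifted_set_subset
    {d : ℕ} (Ω : Set (Ed (d+1))) (hΩo : IsOpen Ω)
    (x₀ : Ed (d+1)) (hx₀ : x₀ ∈ frontier Ω)
    (r : ℝ) (hr : 0 < r) (k : NNReal) (hk : 0 < k)
    (γ : Ed d → ℝ) (hγ : LipschitzWith k γ)
    (hgraph : ∀ x : Ed (d+1),
      x ∈ Ω ∩ Metric.ball x₀ r ↔
        x ∈ Metric.ball x₀ r ∧ γ (WithLp.toLp 2 (fun i => x i.castSucc)) < x (Fin.last d))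
    (τ : ℝ) (hτ : 1 + (k : ℝ) < τ)
    (ε : ℝ) (hε : 0 < ε) (hε' : ε < r / (2 * (1 + τ)))
    (z : Ed (d+1)) (hz : z ∈ Metric.ball (0 : Ed (d+1)) 1) :
    ((fun s => s + ε • (τ • EuclideanSpace.single (Fin.last d) (1:ℝ) - z)) '' Ω)
        ∩ Metric.ball x₀ (r / 2)
      ⊆ Ω ∩ Metric.ball x₀ r := by
  have hzn : ‖z‖ < 1 := by simpa using hz
  have hknn : (0:ℝ) ≤ k := k.2
  have hτ1 : (1:ℝ) < τ := by linarith
  set e : Ed (d+1) := EuclideanSpace.single (Fin.last d) (1:ℝ) with he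
  set v : Ed (d+1) := ε • (τ • e - z) with hv
  rintro ξ ⟨⟨x, hxΩ, rfl⟩, hξball⟩
  have hvle : ‖v‖ ≤ ε * (τ + 1) := by
    have h1 : ‖v‖ = ε * ‖τ • e - z‖ := by
      rw [hv, norm_smul, Real.norm_eq_abs, abs_of_pos hε]
    have h2 : ‖τ • e - z‖ ≤ ‖τ • e‖ + ‖z‖ := norm_sub_le _ _
    have h3 : ‖τ • e‖ = τ := by
      rw [norm_smul, Real.norm_eq_abs, abs_of_pos (by linarith : (0:ℝ) < τ), he,
        EuclideanSpace.norm_single]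
      simp
    rw [h1]
    have : ‖τ • e - z‖ ≤ τ + 1 := by rw [h3] at h2; linarith
    exact mul_le_mul_of_nonneg_left this hε.le
  have hε2 : ε * (2 * (1 + τ)) < r := by
    rw [lt_div_iff₀ (by positivity)] at hε'
    linarith
  have hξr : dist (x + v) x₀ < r / 2 := by simpa [mem_ball] using hξball
  have hxball : x ∈ Metric.ball x₀ r := by
    rw [mem_ball]
    have h4 : dist x x₀ ≤ dist x (x + v) + dist (x + v) x₀ := dist_triangle _ _ _
    have h5 : dist x (x + v) = ‖v‖ := by
      rw [dist_eq_norm]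
      simp
    rw [h5] at h4
    nlinarith
  have hxg := ((hgraph x).mp ⟨hxΩ, hxball⟩).2
  have hξb : x + v ∈ Metric.ball x₀ r :=
    ball_subset_ball (by linarith : r / 2 ≤ r) hξball
  refine ⟨((hgraph (x + v)).mpr ⟨hξb, ?_⟩).1, hξb⟩
  -- coordinates
  have hvcoord : ∀ j : Fin (d+1), v j = ε * (τ * e j - z j) := by
    intro j; simp [hv, PiLp.smul_apply, PiLp.sub_apply, smul_eq_mul, mul_sub]
  have hecast : ∀ i : Fin d, e i.castSucc = 0 := by
    intro i
    simp [he, EuclideanSpace.single_apply, (Fin.castSucc_lt_last i).ne]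
  have helast : e (Fin.last d) = 1 := by simp [he, EuclideanSpace.single_apply]
  set x' : Ed d := WithLp.toLp 2 (fun i => x i.castSucc) with hx'
  set ξ' : Ed d := WithLp.toLp 2 (fun i => (x + v) i.castSucc) with hξ'
  -- Lipschitz estimate
  have hdist : dist ξ' x' ≤ ε * ‖z‖ := by
    rw [dist_eq_norm]
    have := proj_norm_le' (-ε) z (ξ' - x') (fun i => by
      have : (ξ' - x') i = (x + v) i.castSucc - x i.castSucc := rfl
      rw [this]
      have hadd : (x + v) i.castSucc = x i.castSucc + v i.castSucc := rfl
      rw [hadd, hvcoord, hecast]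
      ring)
    rwa [abs_of_neg (neg_neg_iff_pos.mpr hε), neg_neg] at this
  have hlip : γ ξ' - γ x' ≤ (k : ℝ) * (ε * ‖z‖) := by
    have h := hγ.dist_le_mul ξ' x'
    have : |γ ξ' - γ x'| ≤ (k : ℝ) * dist ξ' x' := by
      rwa [Real.dist_eq] at h
    have h2 := (abs_le.mp this).2
    have h3 : (k : ℝ) * dist ξ' x' ≤ (k : ℝ) * (ε * ‖z‖) :=
      mul_le_mul_of_nonneg_left hdist hknn
    linarith
  -- last coordinate
  have hlast : (x + v) (Fin.last d) = x (Fin.last d) + ε * (τ - z (Fin.last d)) := by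
    have : (x + v) (Fin.last d) = x (Fin.last d) + v (Fin.last d) := rfl
    rw [this, hvcoord, helast]; ring
  have hzlast : z (Fin.last d) ≤ ‖z‖ := le_trans (le_abs_self _) (coord_le_norm' z _)
  have hzn0 : (0:ℝ) ≤ ‖z‖ := norm_nonneg z
  show γ ξ' < (x + v) (Fin.last d)
  rw [hlast]
  nlinarith [mul_le_mul_of_nonneg_left hzn.le (mul_nonneg hε.le hknn),
    mul_lt_mul_of_pos_left hτ hε]


end NonlocalMosco
end
end

section
/- Let Ω ⊂ ℝ^d be open and bounded and let ν, the shift setup, and u be as in the context, with u ∈ V_ν(Ω|ℝ^d) ∩ L²(Ω) and supp u compactly contained in B_{r/4}(x₀). Then for every δ > 0 there exists R > 0 such that sup_{z∈B₁(0)} sup_{0<ε<r/(2(1+τ))} ∬_{(Ω×ℝ^d)∖(Ω×B_R(x₀))} (u^z_ε(x)−u^z_ε(y))² ν(x−y) dy dx < δ; in particular there exist sets E_δ ⊂ Ω and F_δ ⊂ ℝ^d with |E_δ×F_δ| < ∞ outside of which the above integrals are uniformly smaller than δ. -/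
open MeasureTheory ENNReal Filter Set Metric Topology Bornology

noncomputable section

namespace NonlocalMosco

private lemma coord_abs_le_norm {n : ℕ} (z : Ed n) (i : Fin n) : |z i| ≤ ‖z‖ := by
  rw [EuclideanSpace.norm_eq, ← Real.sqrt_sq_eq_abs]
  apply Real.sqrt_le_sqrt
  simp only [Real.norm_eq_abs, sq_abs]
  exact Finset.single_le_sum (fun j _ => sq_nonneg (z j)) (Finset.mem_univ i)

private lemma sum_sq_eq_norm_sq {n : ℕ} (z : Ed n) : ∑ i, (z i)^2 = ‖z‖^2 := by
  rw [EuclideanSpace.norm_eq, Real.sq_sqrt (by positivity)]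
  simp [Real.norm_eq_abs, sq_abs]

private lemma lip_sub_le {n : ℕ} {k : NNReal} {γ : Ed n → ℝ} (hγ : LipschitzWith k γ)
    (a b : Ed n) : γ a - γ b ≤ k * Real.sqrt (∑ i, (a i - b i)^2) := by
  have h := hγ.dist_le_mul a b
  rw [EuclideanSpace.dist_eq] at h
  simp only [Real.dist_eq, sq_abs] at h
  calc γ a - γ b ≤ |γ a - γ b| := le_abs_self _
    _ = dist (γ a) (γ b) := (Real.dist_eq _ _).symm
    _ ≤ _ := h

set_option maxHeartbeats 1000000 in
/-- Lemma 2.11, uniform tightness: for `u ∈ V_ν(Ω|ℝ^d) ∩ L²(Ω)` with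
support compactly contained in `B_{r/4}(x₀)`, for every `δ > 0` there is `R > 0` with
`sup_{z∈B₁(0)} sup_{0<ε<r/(2(1+τ))} ∬_{(Ω×ℝ^d)∖(Ω×B_R(x₀))}(u^z_ε(x)−u^z_ε(y))² ν(x−y) < δ`;
in particular there are `E_δ ⊆ Ω`, `F_δ ⊆ ℝ^d` with `|E_δ×F_δ| < ∞` outside of which the
integrals are uniformly `< δ`. -/
theorem tightness_shifted
    {d : ℕ} (Ω : Set (Ed (d+1))) (hΩo : IsOpen Ω) (hΩb : IsBounded Ω)
    (ν : Ed (d+1) → ℝ) (hν : NuLevy ν)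
    (x₀ : Ed (d+1)) (hx₀ : x₀ ∈ frontier Ω)
    (r : ℝ) (hr : 0 < r) (k : NNReal) (hk : 0 < k)
    (γ : Ed d → ℝ) (hγ : LipschitzWith k γ)
    (hgraph : ∀ x : Ed (d+1),
      x ∈ Ω ∩ Metric.ball x₀ r ↔
        x ∈ Metric.ball x₀ r ∧ γ (WithLp.toLp 2 (fun i => x i.castSucc)) < x (Fin.last d))
    (τ : ℝ) (hτ : 1 + (k : ℝ) < τ)
    (u : Ed (d+1) → ℝ) (hu : MemV Ω ν u) (huL2 : MemLp u 2 (volume.restrict Ω))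
    (husupp : HasCompactSupport u) (husuppB : tsupport u ⊆ Metric.ball x₀ (r / 4)) :
    ∀ δ : ℝ, 0 < δ →
      (∃ R : ℝ, 0 < R ∧
        (⨆ z ∈ Metric.ball (0 : Ed (d+1)) 1, ⨆ ε ∈ Set.Ioo 0 (r / (2 * (1 + τ))),
            ∫⁻ p in (Ω ×ˢ (Set.univ : Set (Ed (d+1)))) \ (Ω ×ˢ Metric.ball x₀ R),
              ENNReal.ofReal
                ((shiftFn u τ ε z p.1 - shiftFn u τ ε z p.2)^2 * ν (p.1 - p.2)))
          < ENNReal.ofReal δ) ∧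
      (∃ Eδ Fδ : Set (Ed (d+1)), Eδ ⊆ Ω ∧ volume (Eδ ×ˢ Fδ) < ⊤ ∧
        (⨆ z ∈ Metric.ball (0 : Ed (d+1)) 1, ⨆ ε ∈ Set.Ioo 0 (r / (2 * (1 + τ))),
            ∫⁻ p in (Ω ×ˢ (Set.univ : Set (Ed (d+1)))) \ (Eδ ×ˢ Fδ),
              ENNReal.ofReal
                ((shiftFn u τ ε z p.1 - shiftFn u τ ε z p.2)^2 * ν (p.1 - p.2)))
          < ENNReal.ofReal δ) := by
  intro δ hδ
  obtain ⟨hνm, hνnn, -, hνint, -⟩ := hν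
  have hum : Measurable u := hu.1
  have hk0 : (0:ℝ) ≤ (k:ℝ) := k.coe_nonneg
  have hτ1 : (1:ℝ) < τ := by linarith
  have h1τ : (0:ℝ) < 1 + τ := by linarith
  -- the L² mass
  set C : ℝ≥0∞ := ∫⁻ x in Ω, ENNReal.ofReal (u x ^ 2) with hCdef
  have hC : C < ⊤ := by
    have h2 := lintegral_rpow_enorm_lt_top_of_eLpNorm_lt_top (μ := volume.restrict Ω)
      (f := u) (p := 2) two_ne_zero ENNReal.ofNat_ne_top huL2.2
    have heq : ∀ x, ENNReal.ofReal (u x ^ 2) = ‖u x‖ₑ ^ (2 : ℝ≥0∞).toReal := by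
      intro x
      rw [show ((2:ℝ≥0∞).toReal) = ((2:ℕ):ℝ) by simp, ENNReal.rpow_natCast,
        Real.enorm_eq_ofReal_abs, ← ENNReal.ofReal_pow (abs_nonneg _), sq_abs]
    rw [hCdef]
    simpa only [← heq] using h2
  -- tail integrals of ν
  set T : ℝ → ℝ≥0∞ := fun t => ∫⁻ h in {h : Ed (d+1) | t ≤ ‖h‖}, ENNReal.ofReal (ν h)
    with hTdef
  have hmeasS : ∀ t : ℝ, MeasurableSet {h : Ed (d+1) | t ≤ ‖h‖} := fun t =>
    (isClosed_le continuous_const continuous_norm).measurableSet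
  have hT1 : T 1 < ⊤ := by
    calc T 1 = ∫⁻ h in {h : Ed (d+1) | (1:ℝ) ≤ ‖h‖},
          ENNReal.ofReal (min 1 (‖h‖^2) * ν h) := by
          refine setLIntegral_congr_fun_ae (hmeasS 1) (ae_of_all _ fun h hh => ?_)
          have : (1:ℝ) ≤ ‖h‖ := hh
          rw [min_eq_left (by nlinarith [norm_nonneg h]), one_mul]
      _ ≤ ∫⁻ h, ENNReal.ofReal (min 1 (‖h‖^2) * ν h) := setLIntegral_le_lintegral _ _
      _ < ⊤ := hνint
  have hTmono : ∀ s t : ℝ, s ≤ t → T t ≤ T s := by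
    intro s t hst
    exact lintegral_mono_set (fun h hh => le_trans hst hh)
  -- choose the threshold m
  set η : ℝ≥0∞ := ENNReal.ofReal δ / (C + 1) with hηdef
  have hη : 0 < η :=
    ENNReal.div_pos (ENNReal.ofReal_pos.mpr hδ).ne'
      (ENNReal.add_ne_top.mpr ⟨hC.ne, ENNReal.one_ne_top⟩)
  obtain ⟨m, hm⟩ : ∃ m : ℕ, T (1 + m) < η := by
    set μν : Measure (Ed (d+1)) :=
      (volume.restrict {h : Ed (d+1) | (1:ℝ) ≤ ‖h‖}).withDensity
        (fun h => ENNReal.ofReal (ν h)) with hμνdef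
    have hApply : ∀ t : ℝ, 1 ≤ t → μν {h : Ed (d+1) | t ≤ ‖h‖} = T t := by
      intro t ht
      rw [hμνdef, withDensity_apply _ (hmeasS t), Measure.restrict_restrict (hmeasS t)]
      have hss : {h : Ed (d+1) | t ≤ ‖h‖} ∩ {h : Ed (d+1) | (1:ℝ) ≤ ‖h‖}
          = {h : Ed (d+1) | t ≤ ‖h‖} :=
        Set.inter_eq_left.mpr fun h hh => le_trans ht hh
      rw [hss]
    have hAnti : Antitone (fun n : ℕ => {h : Ed (d+1) | 1 + (n:ℝ) ≤ ‖h‖}) := by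
      intro a b hab h hh
      simp only [Set.mem_setOf_eq] at hh ⊢
      have : (a:ℝ) ≤ b := by exact_mod_cast hab
      linarith
    have hInter : (⋂ n : ℕ, {h : Ed (d+1) | 1 + (n:ℝ) ≤ ‖h‖}) = ∅ := by
      ext h
      simp only [Set.mem_iInter, Set.mem_setOf_eq, Set.mem_empty_iff_false, iff_false, not_forall,
        not_le]
      obtain ⟨n, hn⟩ := exists_nat_gt ‖h‖
      exact ⟨n, by linarith⟩
    have htend := tendsto_measure_iInter_atTop (μ := μν)
      (fun n => (hmeasS _).nullMeasurableSet) hAnti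
      ⟨0, by rw [show (1 + ((0:ℕ):ℝ)) = 1 by norm_num, hApply 1 le_rfl]; exact hT1.ne⟩
    rw [hInter] at htend
    simp only [measure_empty] at htend
    obtain ⟨m, hm⟩ := (htend.eventually_lt_const hη).exists
    refine ⟨m, ?_⟩
    rw [← hApply (1 + m) (le_add_of_nonneg_right (Nat.cast_nonneg m))]
    exact hm
  -- the radius
  set R : ℝ := r + (1 + m) with hRdef
  have hm0 : (0:ℝ) ≤ (m:ℝ) := Nat.cast_nonneg m
  have hRr : r ≤ R := by rw [hRdef]; linarith
  have hR : 0 < R := lt_of_lt_of_le hr hRr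
  -- vanishing outside the small ball
  have husup0 : ∀ ξ : Ed (d+1), ξ ∉ Metric.ball x₀ (r/4) → u ξ = 0 := fun ξ h =>
    image_eq_zero_of_notMem_tsupport fun hc => h (husuppB hc)
  -- the tail kernel function
  set Gfun : Ed (d+1) → ℝ≥0∞ :=
    ({h : Ed (d+1) | 1 + (m:ℝ) ≤ ‖h‖}).indicator (fun h => ENNReal.ofReal (ν h)) with hGdef
  have hGm : Measurable Gfun := (hνm.ennreal_ofReal).indicator (hmeasS _)
  have hGint : ∫⁻ h, Gfun h = T (1 + m) := by
    rw [hGdef, lintegral_indicator (hmeasS _)]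
  -- main uniform bound
  have hmain : ∀ z ∈ Metric.ball (0 : Ed (d+1)) 1, ∀ ε ∈ Set.Ioo 0 (r / (2 * (1 + τ))),
      (∫⁻ p in (Ω ×ˢ (Set.univ : Set (Ed (d+1)))) \ (Ω ×ˢ Metric.ball x₀ R),
        ENNReal.ofReal
          ((shiftFn u τ ε z p.1 - shiftFn u τ ε z p.2)^2 * ν (p.1 - p.2)))
        ≤ C * T (1 + m) := by
    intro z hz ε hε
    obtain ⟨hε0, hεr⟩ := hε
    have hz1 : ‖z‖ < 1 := by simpa [mem_ball, dist_zero_right] using hz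
    have hz0 : (0:ℝ) ≤ ‖z‖ := norm_nonneg z
    set ed : Ed (d+1) := EuclideanSpace.single (Fin.last d) (1:ℝ) with heddef
    set w : Ed (d+1) := ε • (τ • ed - z) with hwdef
    have hshift : ∀ ξ : Ed (d+1), shiftFn u τ ε z ξ = u (ξ + w) := fun ξ => rfl
    -- norm of the shift
    have hwn : ‖w‖ < r / 2 := by
      have h1 : ‖w‖ ≤ ε * (τ + ‖z‖) := by
        rw [hwdef, norm_smul, Real.norm_eq_abs, abs_of_pos hε0]
        have : ‖τ • ed - z‖ ≤ ‖τ • ed‖ + ‖z‖ := norm_sub_le _ _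
        rw [norm_smul, Real.norm_eq_abs, abs_of_pos (by linarith : (0:ℝ) < τ),
          heddef, EuclideanSpace.norm_single, norm_one, mul_one] at this
        exact mul_le_mul_of_nonneg_left this hε0.le
      have h2 : ε * (2 * (1 + τ)) < r := (lt_div_iff₀ (by positivity)).mp hεr
      nlinarith
    -- the shifted point stays inside Ω
    have hshiftΩ : ∀ x : Ed (d+1), x ∈ Ω → u (x + w) ≠ 0 →
        (x + w ∈ Ω ∧ ‖x - x₀‖ < r) := by
      intro x hxΩ hx0
      have hxw : x + w ∈ Metric.ball x₀ (r/4) := husuppB (subset_tsupport u hx0)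
      have hdxw : dist (x + w) x₀ < r / 4 := mem_ball.mp hxw
      have hdx : ‖x - x₀‖ < r := by
        have h3 : dist x x₀ ≤ dist x (x + w) + dist (x + w) x₀ := dist_triangle _ _ _
        have h4 : dist x (x + w) = ‖w‖ := by
          rw [dist_eq_norm]
          simp
        rw [← dist_eq_norm]
        linarith
      have hx_mem : x ∈ Ω ∩ Metric.ball x₀ r :=
        ⟨hxΩ, mem_ball.mpr (by rwa [dist_eq_norm])⟩
      have hγx := ((hgraph x).mp hx_mem).2
      -- coordinates of w
      have hwlast : w (Fin.last d) = ε * (τ - z (Fin.last d)) := by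
        show ε * (τ * ed (Fin.last d) - z (Fin.last d)) = _
        rw [heddef, EuclideanSpace.single_apply, if_pos rfl]
        ring
      have hwcast : ∀ i : Fin d, w i.castSucc = -(ε * z i.castSucc) := by
        intro i
        show ε * (τ * ed i.castSucc - z i.castSucc) = _
        rw [heddef, EuclideanSpace.single_apply, if_neg (Fin.castSucc_lt_last i).ne]
        ring
      -- Lipschitz estimate
      have hlip : γ (WithLp.toLp 2 (fun i => (x + w) i.castSucc)) - γ (WithLp.toLp 2 (fun i => x i.castSucc))
          ≤ k * (ε * ‖z‖) := by
        refine le_trans (lip_sub_le hγ _ _) ?_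
        refine mul_le_mul_of_nonneg_left ?_ hk0
        have hsum : ∑ i : Fin d,
            ((WithLp.toLp 2 (fun i => (x + w) i.castSucc) : Ed d) i - (WithLp.toLp 2 (fun i => x i.castSucc) : Ed d) i)^2
            = ∑ i : Fin d, (ε * z i.castSucc)^2 := by
          refine Finset.sum_congr rfl fun i _ => ?_
          have : (x + w) i.castSucc - x i.castSucc = w i.castSucc := by
            show x i.castSucc + w i.castSucc - x i.castSucc = w i.castSucc
            ring
          show ((x + w) i.castSucc - x i.castSucc)^2 = _
          rw [this, hwcast i, neg_sq]
        rw [hsum]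
        have hle : ∑ i : Fin d, (ε * z i.castSucc)^2 ≤ (ε * ‖z‖)^2 := by
          have h5 : ∑ i : Fin d, (ε * z i.castSucc)^2
              = ε^2 * ∑ i : Fin d, (z i.castSucc)^2 := by
            rw [Finset.mul_sum]
            exact Finset.sum_congr rfl fun i _ => by ring
          have h6 : ∑ i : Fin d, (z i.castSucc)^2 ≤ ∑ j : Fin (d+1), (z j)^2 := by
            rw [Fin.sum_univ_castSucc]
            exact le_add_of_nonneg_right (sq_nonneg _)
          have h7 : ∑ j : Fin (d+1), (z j)^2 = ‖z‖^2 := sum_sq_eq_norm_sq z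
          calc ∑ i : Fin d, (ε * z i.castSucc)^2 = ε^2 * ∑ i : Fin d, (z i.castSucc)^2 := h5
            _ ≤ ε^2 * ‖z‖^2 := by nlinarith [sq_nonneg ε]
            _ = (ε * ‖z‖)^2 := by ring
        calc Real.sqrt (∑ i : Fin d, (ε * z i.castSucc)^2) ≤ Real.sqrt ((ε * ‖z‖)^2) :=
              Real.sqrt_le_sqrt hle
          _ = ε * ‖z‖ := Real.sqrt_sq (by positivity)
      have hzd : z (Fin.last d) ≤ ‖z‖ := (le_abs_self _).trans (coord_abs_le_norm z _)
      have hgoal : γ (WithLp.toLp 2 (fun i => (x + w) i.castSucc)) < (x + w) (Fin.last d) := by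
        have h8 : (x + w) (Fin.last d) = x (Fin.last d) + ε * (τ - z (Fin.last d)) := by
          show x (Fin.last d) + w (Fin.last d) = _
          rw [hwlast]
        rw [h8]
        nlinarith [mul_le_mul_of_nonneg_left hzd hε0.le,
          mul_le_mul_of_nonneg_left hz1.le (mul_nonneg hk0 hε0.le),
          mul_pos hε0 (show (0:ℝ) < τ - 1 - (k:ℝ) by linarith),
          mul_nonneg (mul_nonneg hk0 hε0.le) hz0]
      have hd2 : dist (x + w) x₀ < r := by linarith
      have hxw_ball : x + w ∈ Metric.ball x₀ r := mem_ball.mpr hd2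
      exact ⟨((hgraph (x + w)).mpr ⟨hxw_ball, hgoal⟩).1, hdx⟩
    -- the majorant
    set F : Ed (d+1) → ℝ≥0∞ :=
      fun x => ENNReal.ofReal ((Set.indicator Ω u (x + w))^2) with hFdef
    have hFm : Measurable F := by
      have : Measurable fun x : Ed (d+1) => Set.indicator Ω u (x + w) :=
        (hum.indicator hΩo.measurableSet).comp (measurable_add_const w)
      exact ((this.pow_const 2).ennreal_ofReal)
    have hgm : Measurable (fun p : Ed (d+1) × Ed (d+1) => F p.1 * Gfun (p.1 - p.2)) :=
      (hFm.comp measurable_fst).mul (hGm.comp (measurable_fst.sub measurable_snd))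
    -- pointwise bound on the region
    have hpt : ∀ p : Ed (d+1) × Ed (d+1),
        p ∈ (Ω ×ˢ (Set.univ : Set (Ed (d+1)))) \ (Ω ×ˢ Metric.ball x₀ R) →
        ENNReal.ofReal ((shiftFn u τ ε z p.1 - shiftFn u τ ε z p.2)^2 * ν (p.1 - p.2))
          ≤ F p.1 * Gfun (p.1 - p.2) := by
      rintro ⟨x, y⟩ hp
      simp only [Set.mem_diff, Set.mem_prod, Set.mem_univ, and_true, not_and] at hp
      obtain ⟨hxΩ, hy'⟩ := hp
      have hy : y ∉ Metric.ball x₀ R := hy' hxΩ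
      have hyR : R ≤ dist y x₀ := by simpa [mem_ball, not_lt] using hy
      have hy0 : u (y + w) = 0 := by
        apply husup0
        intro hmem
        have h9 : dist (y + w) x₀ < r / 4 := mem_ball.mp hmem
        have h10 : dist y (y + w) = ‖w‖ := by rw [dist_eq_norm]; simp
        have h11 : dist y x₀ ≤ dist y (y + w) + dist (y + w) x₀ := dist_triangle _ _ _
        linarith
      rw [hshift, hshift, hy0, sub_zero]
      by_cases hx0 : u (x + w) = 0
      · rw [hx0]
        simp
      · obtain ⟨hxwΩ, hxr⟩ := hshiftΩ x hxΩ hx0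
        have hFx : F x = ENNReal.ofReal ((u (x + w))^2) := by
          rw [hFdef]
          simp only [Set.indicator_of_mem hxwΩ]
        have hxy : (1:ℝ) + m ≤ ‖x - y‖ := by
          have h12 : dist y x₀ ≤ dist y x + dist x x₀ := dist_triangle _ _ _
          have h13 : dist x x₀ < r := by rwa [dist_eq_norm]
          have h14 : dist y x = ‖x - y‖ := by rw [dist_comm, dist_eq_norm]
          rw [hRdef] at hyR
          linarith
        have hGxy : Gfun (x - y) = ENNReal.ofReal (ν (x - y)) := by
          rw [hGdef]
          exact Set.indicator_of_mem
            (show x - y ∈ {h : Ed (d+1) | 1 + (m:ℝ) ≤ ‖h‖} from hxy) _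
        rw [hFx, hGxy, ← ENNReal.ofReal_mul (sq_nonneg _)]
    -- integrate the majorant
    have hinner : ∀ x : Ed (d+1), (∫⁻ y, Gfun (x - y)) = T (1 + m) := by
      intro x
      have e1 : (∫⁻ y, Gfun (x - y)) = ∫⁻ y, Gfun (x + y) := by
        have e0 := (Measure.measurePreserving_neg (volume : Measure (Ed (d+1)))).lintegral_comp
          (f := fun t => Gfun (x + t)) (hGm.comp (measurable_const_add x))
        simp only [← sub_eq_add_neg] at e0
        exact e0
      rw [e1, lintegral_add_left_eq_self (fun t => Gfun t) x, hGint]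
    calc (∫⁻ p in (Ω ×ˢ (Set.univ : Set (Ed (d+1)))) \ (Ω ×ˢ Metric.ball x₀ R),
          ENNReal.ofReal
            ((shiftFn u τ ε z p.1 - shiftFn u τ ε z p.2)^2 * ν (p.1 - p.2)))
        ≤ ∫⁻ p in (Ω ×ˢ (Set.univ : Set (Ed (d+1)))) \ (Ω ×ˢ Metric.ball x₀ R),
            F p.1 * Gfun (p.1 - p.2) := setLIntegral_mono hgm hpt
      _ ≤ ∫⁻ p : Ed (d+1) × Ed (d+1), F p.1 * Gfun (p.1 - p.2) :=
            setLIntegral_le_lintegral _ _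
      _ = ∫⁻ x, ∫⁻ y, F x * Gfun (x - y) := by
            rw [MeasureTheory.Measure.volume_eq_prod, lintegral_prod _ hgm.aemeasurable]
      _ = ∫⁻ x, F x * T (1 + m) := by
            refine lintegral_congr fun x => ?_
            have hGy : Measurable fun y : Ed (d+1) => Gfun (x - y) :=
              hGm.comp (measurable_const.sub measurable_id')
            rw [lintegral_const_mul _ hGy, hinner x]
      _ = (∫⁻ x, F x) * T (1 + m) := lintegral_mul_const _ hFm
      _ = C * T (1 + m) := by
            congr 1
            have e4 : (∫⁻ x, F x) = ∫⁻ x, ENNReal.ofReal ((Set.indicator Ω u x)^2) :=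
              lintegral_add_right_eq_self
                (fun x => ENNReal.ofReal ((Set.indicator Ω u x)^2)) w
            have e5 : (fun x => ENNReal.ofReal ((Set.indicator Ω u x)^2))
                = Set.indicator Ω (fun x => ENNReal.ofReal (u x ^ 2)) := by
              funext x
              by_cases hx : x ∈ Ω
              · simp [Set.indicator_of_mem hx]
              · simp [Set.indicator_of_notMem hx]
            rw [e4, e5, lintegral_indicator hΩo.measurableSet, hCdef]
  -- conclude
  have hfinal : C * T (1 + m) < ENNReal.ofReal δ := by
    rcases eq_or_ne C 0 with hC0 | hC0
    · rw [hC0, zero_mul]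
      exact ENNReal.ofReal_pos.mpr hδ
    · calc C * T (1 + m) < C * η :=
            ENNReal.mul_lt_mul_right hC0 hC.ne hm
        _ ≤ (C + 1) * η := mul_le_mul_left le_self_add _
        _ = ENNReal.ofReal δ := by
            rw [hηdef]
            exact ENNReal.mul_div_cancel (by simp) (ENNReal.add_ne_top.mpr ⟨hC.ne, one_ne_top⟩)
  have hsup : (⨆ z ∈ Metric.ball (0 : Ed (d+1)) 1, ⨆ ε ∈ Set.Ioo 0 (r / (2 * (1 + τ))),
      ∫⁻ p in (Ω ×ˢ (Set.univ : Set (Ed (d+1)))) \ (Ω ×ˢ Metric.ball x₀ R),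
        ENNReal.ofReal
          ((shiftFn u τ ε z p.1 - shiftFn u τ ε z p.2)^2 * ν (p.1 - p.2)))
      < ENNReal.ofReal δ := by
    refine lt_of_le_of_lt (iSup₂_le fun z hz => iSup₂_le fun ε hε => hmain z hz ε hε) hfinal
  refine ⟨⟨R, hR, hsup⟩, ⟨Ω, Metric.ball x₀ R, subset_rfl, ?_, hsup⟩⟩
  rw [MeasureTheory.Measure.volume_eq_prod, Measure.prod_prod]
  exact ENNReal.mul_lt_top hΩb.measure_lt_top measure_ball_lt_top


end NonlocalMosco
end
end
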